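/- arXiv:2102.11646 — 5 statements merged into one kernel-verified Lean document; each statement's English description precedes it below -/
import Mathlib

section
/- Consider the relaxed Multiple Choice Knapsack Problem. If the feasible set F is nonempty, then there exists a maximizer u* of the objective u ↦ Σ_{i=1}^k Σ_{j∈N_i} p_{ij} u_{ij} over F such that the block u*_i is one-hot (has exactly one nonzero entry) for every i ∈ {1,…,k} with at most one exception. -/
lemma mckp_sum_mul_w {n : ℕ} (s : Finset (Fin n)) (q : Fin n → ℝ)
    (j1 j2 j3 j4 : Fin n) (c1 c2 : ℝ)
    (h12 : j1 ≠ j2) (h13 : j1 ≠ j3) (h14 : j1 ≠ j4)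
    (h23 : j2 ≠ j3) (h24 : j2 ≠ j4) (h34 : j3 ≠ j4) :
    ∑ j ∈ s, q j * (if j = j1 then c1 else if j = j2 then -c1 else
        if j = j3 then c2 else if j = j4 then -c2 else 0)
      = (if j1 ∈ s then c1 * q j1 else 0) + (if j2 ∈ s then -c1 * q j2 else 0)
        + (if j3 ∈ s then c2 * q j3 else 0) + (if j4 ∈ s then -c2 * q j4 else 0) := by
  have key : ∀ j : Fin n, q j * (if j = j1 then c1 else if j = j2 then -c1 else
        if j = j3 then c2 else if j = j4 then -c2 else 0)
      = (if j = j1 then c1 * q j else 0) + ((if j = j2 then -c1 * q j else 0)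
        + ((if j = j3 then c2 * q j else 0) + (if j = j4 then -c2 * q j else 0))) := by
    intro j
    by_cases h1 : j = j1 <;> by_cases h2 : j = j2 <;> by_cases h3 : j = j3 <;>
      by_cases h4 : j = j4 <;> simp_all <;> ring
  rw [Finset.sum_congr rfl (fun j _ => key j), Finset.sum_add_distrib,
    Finset.sum_add_distrib, Finset.sum_add_distrib,
    Finset.sum_ite_eq' s j1, Finset.sum_ite_eq' s j2,
    Finset.sum_ite_eq' s j3, Finset.sum_ite_eq' s j4]
  ring

set_option maxHeartbeats 1000000 in
theorem mckp_exists_maximizer_all_blocks_one_hot_but_one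
    (k n : ℕ) (hk : 1 ≤ k) (hn : 1 ≤ n)
    (N : Fin k → Finset (Fin n))
    (hNne : ∀ i, (N i).Nonempty)
    (hNdisj : ∀ i i' : Fin k, i ≠ i' → Disjoint (N i) (N i'))
    (hNcover : ∀ j : Fin n, ∃ i : Fin k, j ∈ N i)
    (p t : Fin n → ℝ) (T : ℝ)
    (F : Set (Fin n → ℝ))
    (hF : F = {u : Fin n → ℝ |
      (∀ j, 0 ≤ u j) ∧ (∀ i, ∑ j ∈ N i, u j = 1) ∧
      ∑ i : Fin k, ∑ j ∈ N i, t j * u j ≤ T})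
    (hFne : F.Nonempty) :
    ∃ u ∈ F,
      (∀ v ∈ F, ∑ i : Fin k, ∑ j ∈ N i, p j * v j ≤
        ∑ i : Fin k, ∑ j ∈ N i, p j * u j) ∧
      ∃ i₀ : Fin k, ∀ i : Fin k, i ≠ i₀ →
        {j : Fin n | j ∈ N i ∧ u j ≠ 0}.ncard = 1 := by
  have hmemF : ∀ v : Fin n → ℝ, v ∈ F ↔
      ((∀ j, 0 ≤ v j) ∧ (∀ i, ∑ j ∈ N i, v j = 1) ∧
        ∑ i : Fin k, ∑ j ∈ N i, t j * v j ≤ T) := by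
    intro v; rw [hF]; exact Iff.rfl
  -- continuity of double sums
  have hcont : ∀ q : Fin n → ℝ,
      Continuous (fun u : Fin n → ℝ => ∑ i : Fin k, ∑ j ∈ N i, q j * u j) := by
    intro q
    exact continuous_finset_sum _ fun i _ =>
      continuous_finset_sum _ fun j _ => continuous_const.mul (continuous_apply j)
  -- F is closed
  have hFclosed : IsClosed F := by
    rw [hF]
    have h1 : {u : Fin n → ℝ | (∀ j, 0 ≤ u j) ∧ (∀ i, ∑ j ∈ N i, u j = 1) ∧
        ∑ i : Fin k, ∑ j ∈ N i, t j * u j ≤ T}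
        = (⋂ j : Fin n, {u : Fin n → ℝ | 0 ≤ u j}) ∩
          ((⋂ i : Fin k, {u : Fin n → ℝ | ∑ j ∈ N i, u j = 1}) ∩
            {u : Fin n → ℝ | ∑ i : Fin k, ∑ j ∈ N i, t j * u j ≤ T}) := by
      ext v
      simp only [Set.mem_inter_iff, Set.mem_iInter, Set.mem_setOf_eq]
    rw [h1]
    exact IsClosed.inter
      (isClosed_iInter fun j => isClosed_le continuous_const (continuous_apply j))
      (IsClosed.inter
        (isClosed_iInter fun i =>
          isClosed_eq (continuous_finset_sum _ fun j _ => continuous_apply j)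
            continuous_const)
        (isClosed_le (hcont t) continuous_const))
  -- F is bounded, hence compact
  have hsub : F ⊆ Set.Icc (fun _ => (0:ℝ)) (fun _ => (1:ℝ)) := by
    intro v hv
    rw [hmemF] at hv
    obtain ⟨hpos, hsum, -⟩ := hv
    simp only [Set.mem_Icc, Pi.le_def]
    refine ⟨fun j => hpos j, fun j => ?_⟩
    obtain ⟨i, hji⟩ := hNcover j
    calc v j ≤ ∑ j' ∈ N i, v j' := Finset.single_le_sum (fun j' _ => hpos j') hji
      _ = 1 := hsum i
  have hFcpt : IsCompact F := IsCompact.of_isClosed_subset isCompact_Icc hFclosed hsub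
  -- maximizer of f on F
  obtain ⟨u₁, hu₁F, hu₁max⟩ := hFcpt.exists_isMaxOn hFne ((hcont p).continuousOn)
  rw [isMaxOn_iff] at hu₁max
  -- argmax super-level set
  set G : Set (Fin n → ℝ) := F ∩ {v : Fin n → ℝ |
    ∑ i : Fin k, ∑ j ∈ N i, p j * u₁ j ≤ ∑ i : Fin k, ∑ j ∈ N i, p j * v j} with hG
  have hGne : G.Nonempty := ⟨u₁, hu₁F, by simp⟩
  have hGcpt : IsCompact G :=
    hFcpt.inter_right (isClosed_le continuous_const (hcont p))
  have hgcont : Continuous (fun v : Fin n → ℝ => ∑ j : Fin n, (v j)^2) :=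
    continuous_finset_sum _ fun j _ => (continuous_apply j).pow 2
  obtain ⟨u, huG, humax⟩ := hGcpt.exists_isMaxOn hGne hgcont.continuousOn
  rw [isMaxOn_iff] at humax
  obtain ⟨huF, huge⟩ := huG
  have hufmax : ∀ v ∈ F, ∑ i : Fin k, ∑ j ∈ N i, p j * v j ≤
      ∑ i : Fin k, ∑ j ∈ N i, p j * u j :=
    fun v hv => le_trans (hu₁max v hv) huge
  obtain ⟨hupos, husum, hubud⟩ := (hmemF u).mp huF
  -- key exchange argument
  have key : ∀ i i' : Fin k, i ≠ i' →
      1 < ((N i).filter fun j => u j ≠ 0).card →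
      1 < ((N i').filter fun j => u j ≠ 0).card → False := by
    intro i i' hii' hci hci'
    obtain ⟨j1, hj1, j2, hj2, h12⟩ := Finset.one_lt_card.mp hci
    obtain ⟨j3, hj3, j4, hj4, h34⟩ := Finset.one_lt_card.mp hci'
    simp only [Finset.mem_filter] at hj1 hj2 hj3 hj4
    have hdisj := Finset.disjoint_left.mp (hNdisj i i' hii')
    have h13 : j1 ≠ j3 := fun h => hdisj hj1.1 (h ▸ hj3.1)
    have h14 : j1 ≠ j4 := fun h => hdisj hj1.1 (h ▸ hj4.1)
    have h23 : j2 ≠ j3 := fun h => hdisj hj2.1 (h ▸ hj3.1)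
    have h24 : j2 ≠ j4 := fun h => hdisj hj2.1 (h ▸ hj4.1)
    set a : ℝ := t j1 - t j2 with ha
    set b : ℝ := t j3 - t j4 with hb'
    set c1 : ℝ := if a = 0 then 1 else b with hc1
    set c2 : ℝ := if a = 0 then 0 else -a with hc2
    have hcab : c1 * a + c2 * b = 0 := by
      by_cases h : a = 0 <;> simp [hc1, hc2, h] <;> ring
    set w : Fin n → ℝ := fun j => if j = j1 then c1 else if j = j2 then -c1 else
        if j = j3 then c2 else if j = j4 then -c2 else 0 with hw
    have hwj1 : w j1 = c1 := by simp [hw]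
    have hwj2 : w j2 = -c1 := by simp [hw, h12, Ne.symm h12]
    have hwj3 : w j3 = c2 := by simp [hw, Ne.symm h13, Ne.symm h23]
    have hwj4 : w j4 = -c2 := by simp [hw, Ne.symm h14, Ne.symm h24, h34, Ne.symm h34]
    have hblock : ∀ (q : Fin n → ℝ) (s : Finset (Fin n)),
        ∑ j ∈ s, q j * w j
          = (if j1 ∈ s then c1 * q j1 else 0) + (if j2 ∈ s then -c1 * q j2 else 0)
            + (if j3 ∈ s then c2 * q j3 else 0) + (if j4 ∈ s then -c2 * q j4 else 0) :=
      fun q s => mckp_sum_mul_w s q j1 j2 j3 j4 c1 c2 h12 h13 h14 h23 h24 h34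
    -- block memberships
    have hmem_i : ∀ i'' : Fin k, i'' ≠ i → j1 ∉ N i'' ∧ j2 ∉ N i'' := by
      intro i'' h
      have hd := Finset.disjoint_left.mp (hNdisj i i'' (Ne.symm h))
      exact ⟨fun hh => hd hj1.1 hh, fun hh => hd hj2.1 hh⟩
    have hmem_i' : ∀ i'' : Fin k, i'' ≠ i' → j3 ∉ N i'' ∧ j4 ∉ N i'' := by
      intro i'' h
      have hd := Finset.disjoint_left.mp (hNdisj i' i'' (Ne.symm h))
      exact ⟨fun hh => hd hj3.1 hh, fun hh => hd hj4.1 hh⟩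
    have hblock_i : ∀ q : Fin n → ℝ, ∑ j ∈ N i, q j * w j = c1 * q j1 - c1 * q j2 := by
      intro q
      rw [hblock q (N i)]
      have h3 := (hmem_i' i hii').1
      have h4 := (hmem_i' i hii').2
      rw [if_pos hj1.1, if_pos hj2.1, if_neg h3, if_neg h4]
      ring
    have hblock_i' : ∀ q : Fin n → ℝ, ∑ j ∈ N i', q j * w j = c2 * q j3 - c2 * q j4 := by
      intro q
      rw [hblock q (N i')]
      have h1' := (hmem_i i' (Ne.symm hii')).1
      have h2' := (hmem_i i' (Ne.symm hii')).2
      rw [if_neg h1', if_neg h2', if_pos hj3.1, if_pos hj4.1]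
      ring
    have hblock_other : ∀ (q : Fin n → ℝ) (i'' : Fin k), i'' ≠ i → i'' ≠ i' →
        ∑ j ∈ N i'', q j * w j = 0 := by
      intro q i'' h h'
      rw [hblock q (N i''), if_neg (hmem_i i'' h).1, if_neg (hmem_i i'' h).2,
        if_neg (hmem_i' i'' h').1, if_neg (hmem_i' i'' h').2]
      ring
    -- double sums against w
    have hdq : ∀ q : Fin n → ℝ, ∑ i'' : Fin k, ∑ j ∈ N i'', q j * w j
        = c1 * q j1 - c1 * q j2 + (c2 * q j3 - c2 * q j4) := by
      intro q
      rw [← Finset.sum_subset (Finset.subset_univ {i, i'})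
        (fun x _ hx => hblock_other q x (fun h => hx (by simp [h]))
          (fun h => hx (by simp [h])))]
      rw [Finset.sum_pair hii', hblock_i q, hblock_i' q]
    have hbudw : ∑ i'' : Fin k, ∑ j ∈ N i'', t j * w j = 0 := by
      rw [hdq t]
      have : a = t j1 - t j2 := ha
      have : b = t j3 - t j4 := hb'
      linear_combination hcab + c1 * ha - c2 * hb' + 2 * c2 * hb'
    -- block sums of w are zero
    have hws : ∀ i'' : Fin k, ∑ j ∈ N i'', w j = 0 := by
      intro i''
      have h1 : ∑ j ∈ N i'', w j = ∑ j ∈ N i'', (1:ℝ) * w j := by simp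
      rw [h1]
      by_cases e : i'' = i
      · rw [e, hblock_i]; ring
      by_cases e' : i'' = i'
      · rw [e', hblock_i']; ring
      · exact hblock_other _ _ e e'
    -- positivity setup
    have hu1 : 0 < u j1 := lt_of_le_of_ne (hupos j1) (Ne.symm hj1.2)
    have hu2 : 0 < u j2 := lt_of_le_of_ne (hupos j2) (Ne.symm hj2.2)
    have hu3 : 0 < u j3 := lt_of_le_of_ne (hupos j3) (Ne.symm hj3.2)
    have hu4 : 0 < u j4 := lt_of_le_of_ne (hupos j4) (Ne.symm hj4.2)
    set m : ℝ := min (min (u j1) (u j2)) (min (u j3) (u j4)) with hm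
    have hmpos : 0 < m := lt_min (lt_min hu1 hu2) (lt_min hu3 hu4)
    set M : ℝ := |c1| + |c2| + 1 with hM
    have hMpos : 0 < M := by positivity
    set ε : ℝ := m / M with hε'
    have hε : 0 < ε := div_pos hmpos hMpos
    have hεM : ε * M = m := div_mul_cancel₀ m (ne_of_gt hMpos)
    have hmle : m ≤ u j1 ∧ m ≤ u j2 ∧ m ≤ u j3 ∧ m ≤ u j4 :=
      ⟨le_trans (min_le_left _ _) (min_le_left _ _),
       le_trans (min_le_left _ _) (min_le_right _ _),
       le_trans (min_le_right _ _) (min_le_left _ _),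
       le_trans (min_le_right _ _) (min_le_right _ _)⟩
    have habsle : ∀ j : Fin n, ε * |w j| ≤ u j := by
      intro j
      have hcM : |c1| ≤ M ∧ |c2| ≤ M := by
        constructor <;> · rw [hM]; nlinarith [abs_nonneg c1, abs_nonneg c2]
      have step : ∀ c : ℝ, |c| ≤ M → ε * |c| ≤ m := by
        intro c hc
        calc ε * |c| ≤ ε * M := mul_le_mul_of_nonneg_left hc hε.le
          _ = m := hεM
      by_cases e1 : j = j1
      · rw [e1, hwj1]; exact le_trans (step c1 hcM.1) hmle.1
      by_cases e2 : j = j2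
      · rw [e2, hwj2, abs_neg]; exact le_trans (step c1 hcM.1) hmle.2.1
      by_cases e3 : j = j3
      · rw [e3, hwj3]; exact le_trans (step c2 hcM.2) hmle.2.2.1
      by_cases e4 : j = j4
      · rw [e4, hwj4, abs_neg]; exact le_trans (step c2 hcM.2) hmle.2.2.2
      · have : w j = 0 := by simp [hw, e1, e2, e3, e4]
        rw [this, abs_zero, mul_zero]; exact hupos j
    -- perturbed points are feasible
    have hmemP : ∀ s : ℝ, s = 1 ∨ s = -1 → (fun j => u j + (s * ε) * w j) ∈ F := by
      intro s hs
      rw [hmemF]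
      refine ⟨?_, ?_, ?_⟩
      · intro j
        have h1 := habsle j
        have h2 : -|w j| ≤ w j := neg_abs_le _
        have h3 : w j ≤ |w j| := le_abs_self _
        rcases hs with rfl | rfl <;> simp only [one_mul, neg_one_mul] <;>
          nlinarith [hε, mul_le_mul_of_nonneg_left h2 hε.le,
            mul_le_mul_of_nonneg_left h3 hε.le]
      · intro i''
        rw [Finset.sum_add_distrib, husum i'', ← Finset.mul_sum, hws i'',
          mul_zero, add_zero]
      · have e : ∀ i'' : Fin k, ∑ j ∈ N i'', t j * (u j + (s * ε) * w j)
            = (∑ j ∈ N i'', t j * u j) + (s * ε) * ∑ j ∈ N i'', t j * w j := by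
          intro i''
          rw [Finset.mul_sum, ← Finset.sum_add_distrib]
          exact Finset.sum_congr rfl fun j _ => by ring
        calc ∑ i'' : Fin k, ∑ j ∈ N i'', t j * (u j + (s * ε) * w j)
            = (∑ i'' : Fin k, ∑ j ∈ N i'', t j * u j)
              + (s * ε) * ∑ i'' : Fin k, ∑ j ∈ N i'', t j * w j := by
              rw [Finset.sum_congr rfl fun i'' _ => e i'', Finset.sum_add_distrib,
                ← Finset.mul_sum]
          _ ≤ T := by rw [hbudw, mul_zero, add_zero]; exact hubud
    -- objective values of perturbed points
    have hfval : ∀ s : ℝ, ∑ i'' : Fin k, ∑ j ∈ N i'', p j * (u j + (s * ε) * w j)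
        = (∑ i'' : Fin k, ∑ j ∈ N i'', p j * u j)
          + (s * ε) * ∑ i'' : Fin k, ∑ j ∈ N i'', p j * w j := by
      intro s
      have e : ∀ i'' : Fin k, ∑ j ∈ N i'', p j * (u j + (s * ε) * w j)
          = (∑ j ∈ N i'', p j * u j) + (s * ε) * ∑ j ∈ N i'', p j * w j := by
        intro i''
        rw [Finset.mul_sum, ← Finset.sum_add_distrib]
        exact Finset.sum_congr rfl fun j _ => by ring
      rw [Finset.sum_congr rfl fun i'' _ => e i'', Finset.sum_add_distrib,
        ← Finset.mul_sum]
    have hvp := hmemP 1 (Or.inl rfl)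
    have hvm := hmemP (-1) (Or.inr rfl)
    have hle1 := hufmax _ hvp
    have hle2 := hufmax _ hvm
    rw [hfval 1] at hle1
    rw [hfval (-1)] at hle2
    have hPw : ∑ i'' : Fin k, ∑ j ∈ N i'', p j * w j = 0 := by nlinarith [hε]
    -- perturbed points are in G
    have hGmem : ∀ s : ℝ, s = 1 ∨ s = -1 → (fun j => u j + (s * ε) * w j) ∈ G := by
      intro s hs
      refine ⟨hmemP s hs, ?_⟩
      show ∑ i'' : Fin k, ∑ j ∈ N i'', p j * u₁ j ≤ _
      rw [hfval s, hPw, mul_zero, add_zero]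
      exact huge
    have hg1 := humax _ (hGmem 1 (Or.inl rfl))
    have hg2 := humax _ (hGmem (-1) (Or.inr rfl))
    -- sum of squares identity
    have hsq : (∑ j : Fin n, (u j + (1 * ε) * w j)^2)
        + (∑ j : Fin n, (u j + (-1 * ε) * w j)^2)
        = 2 * (∑ j : Fin n, (u j)^2) + 2 * ε^2 * ∑ j : Fin n, (w j)^2 := by
      rw [← Finset.sum_add_distrib, Finset.mul_sum, Finset.mul_sum,
        ← Finset.sum_add_distrib]
      exact Finset.sum_congr rfl fun j _ => by ring
    -- w has a strictly positive square somewhere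
    have hSpos : 0 < ∑ j : Fin n, (w j)^2 := by
      have h1 : (w j1)^2 + (w j3)^2 ≤ ∑ j : Fin n, (w j)^2 := by
        have := Finset.sum_le_sum_of_subset_of_nonneg
          (Finset.subset_univ ({j1, j3} : Finset (Fin n)))
          (fun j _ _ => sq_nonneg (w j))
        rwa [Finset.sum_pair h13] at this
      have h2 : 0 < (w j1)^2 + (w j3)^2 := by
        rw [hwj1, hwj3]
        by_cases h : a = 0
        · have : c1 = 1 := by rw [hc1, if_pos h]
          rw [this]; nlinarith [sq_nonneg c2]
        · have : c2 = -a := by rw [hc2, if_neg h]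
          rw [this]
          have ha2 : 0 < a^2 := by positivity
          nlinarith [sq_nonneg c1]
      linarith
    have hprod : 0 < ε ^ 2 * ∑ j : Fin n, (w j)^2 := mul_pos (pow_pos hε 2) hSpos
    linarith [hg1, hg2, hsq, hprod]
  -- wrap up
  have hne1 : ∀ i : Fin k, 1 ≤ ((N i).filter fun j => u j ≠ 0).card := by
    intro i
    rw [Nat.one_le_iff_ne_zero, Ne, Finset.card_eq_zero]
    intro h0
    have hz : ∑ j ∈ N i, u j = 0 := Finset.sum_eq_zero fun j hj => by
      by_contra hne
      have : j ∈ (N i).filter fun j => u j ≠ 0 := Finset.mem_filter.mpr ⟨hj, hne⟩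
      rw [h0] at this
      exact absurd this (Finset.notMem_empty j)
    rw [husum i] at hz; norm_num at hz
  have hncard : ∀ i : Fin k, {j : Fin n | j ∈ N i ∧ u j ≠ 0}.ncard
      = ((N i).filter fun j => u j ≠ 0).card := by
    intro i
    rw [show {j : Fin n | j ∈ N i ∧ u j ≠ 0} = ↑((N i).filter fun j => u j ≠ 0) by
      ext j; simp]
    exact Set.ncard_coe_finset _
  refine ⟨u, huF, hufmax, ?_⟩
  by_cases hall : ∀ i : Fin k, ((N i).filter fun j => u j ≠ 0).card = 1
  · exact ⟨⟨0, hk⟩, fun i _ => by rw [hncard]; exact hall i⟩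
  · push_neg at hall
    obtain ⟨i₀, hi₀⟩ := hall
    refine ⟨i₀, fun i hi => ?_⟩
    rw [hncard]
    by_contra hci
    exact key i i₀ hi (lt_of_le_of_ne (hne1 i) (Ne.symm hci))
      (lt_of_le_of_ne (hne1 i₀) (Ne.symm hi₀))
end

section
/- Consider the relaxed Multiple Choice Knapsack Problem. If the feasible set F is nonempty, then there exists a maximizer u* of the objective u ↦ Σ_{i=1}^k Σ_{j∈N_i} p_{ij} u_{ij} over F such that at most one block u*_{i₀} fails to be one-hot, and this exceptional block has at most two nonzero entries; equivalently, every block of u* has exactly one nonzero entry, except possibly a single block which has at most two nonzero entries. -/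
/-!
Relaxed Multiple Choice Knapsack Problem (MCKP).
If the feasible set is nonempty, then there exists a maximizer of the linear
objective such that every block has exactly one nonzero entry, except possibly
a single exceptional block which has at most two nonzero entries.
-/

theorem mckp_sum_partition {k n : ℕ} (N : Fin k → Finset (Fin n))
    (hNdisj : ∀ i i' : Fin k, i ≠ i' → Disjoint (N i) (N i'))
    (hNcover : ∀ j : Fin n, ∃ i : Fin k, j ∈ N i) (g : Fin n → ℝ) :
    ∑ i : Fin k, ∑ j ∈ N i, g j = ∑ j : Fin n, g j := by
  rw [← Finset.sum_biUnion (fun a _ b _ hab => hNdisj a b hab)]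
  apply Finset.sum_congr _ (fun _ _ => rfl)
  ext j
  simp [hNcover j]

theorem mckp_exists_maximizer_one_hot_except_one_block_two_nonzeros
    (k n : ℕ) (hk : 1 ≤ k) (hn : 1 ≤ n)
    (N : Fin k → Finset (Fin n))
    (hNne : ∀ i, (N i).Nonempty)
    (hNdisj : ∀ i i' : Fin k, i ≠ i' → Disjoint (N i) (N i'))
    (hNcover : ∀ j : Fin n, ∃ i : Fin k, j ∈ N i)
    (p t : Fin n → ℝ) (T : ℝ)
    (F : Set (Fin n → ℝ))
    (hF : F = {u : Fin n → ℝ |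
      (∀ j, 0 ≤ u j) ∧ (∀ i, ∑ j ∈ N i, u j = 1) ∧
      ∑ i : Fin k, ∑ j ∈ N i, t j * u j ≤ T})
    (hFne : F.Nonempty) :
    ∃ u ∈ F,
      (∀ v ∈ F, ∑ i : Fin k, ∑ j ∈ N i, p j * v j ≤
        ∑ i : Fin k, ∑ j ∈ N i, p j * u j) ∧
      ∃ i₀ : Fin k,
        (∀ i : Fin k, i ≠ i₀ → {j : Fin n | j ∈ N i ∧ u j ≠ 0}.ncard = 1) ∧
        {j : Fin n | j ∈ N i₀ ∧ u j ≠ 0}.ncard ≤ 2 := by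
  have hsum : ∀ g : Fin n → ℝ, ∑ i : Fin k, ∑ j ∈ N i, g j = ∑ j : Fin n, g j :=
    mckp_sum_partition N hNdisj hNcover
  have huni : ∀ {j : Fin n} {i i' : Fin k}, j ∈ N i → j ∈ N i' → i = i' := by
    intro j i i' h h'
    by_contra hne
    exact Finset.disjoint_left.mp (hNdisj i i' hne) h h'
  have hmemF : ∀ u : Fin n → ℝ, u ∈ F ↔
      ((∀ j, 0 ≤ u j) ∧ (∀ i, ∑ j ∈ N i, u j = 1) ∧ ∑ j : Fin n, t j * u j ≤ T) := by
    intro u; rw [hF]; simp only [Set.mem_setOf_eq, hsum (fun j => t j * u j)]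
  set obj : (Fin n → ℝ) → ℝ := fun u => ∑ j : Fin n, p j * u j with hobj
  -- compactness of F
  have hclosed : IsClosed F := by
    rw [hF]
    have hrw : {u : Fin n → ℝ |
        (∀ j, 0 ≤ u j) ∧ (∀ i, ∑ j ∈ N i, u j = 1) ∧
        ∑ i : Fin k, ∑ j ∈ N i, t j * u j ≤ T} =
        (⋂ j : Fin n, {u : Fin n → ℝ | 0 ≤ u j}) ∩
        ((⋂ i : Fin k, {u : Fin n → ℝ | ∑ j ∈ N i, u j = 1}) ∩
         {u : Fin n → ℝ | ∑ i : Fin k, ∑ j ∈ N i, t j * u j ≤ T}) := by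
      ext u; simp [Set.mem_iInter]
    rw [hrw]
    refine IsClosed.inter (isClosed_iInter fun j =>
        isClosed_le continuous_const (continuous_apply j)) (IsClosed.inter
      (isClosed_iInter fun i => isClosed_eq
        (continuous_finset_sum _ fun j _ => continuous_apply j) continuous_const)
      (isClosed_le (continuous_finset_sum _ fun i _ =>
        continuous_finset_sum _ fun j _ => continuous_const.mul (continuous_apply j))
        continuous_const))
  have hsubset : F ⊆ Set.pi Set.univ fun _ => Set.Icc (0:ℝ) 1 := by
    intro u hu
    obtain ⟨h0, h1, -⟩ := (hmemF u).mp hu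
    intro j _
    refine ⟨h0 j, ?_⟩
    obtain ⟨i, hij⟩ := hNcover j
    calc u j ≤ ∑ j' ∈ N i, u j' := Finset.single_le_sum (fun j' _ => h0 j') hij
    _ = 1 := h1 i
  have hcpt : IsCompact F :=
    IsCompact.of_isClosed_subset (isCompact_univ_pi fun _ => isCompact_Icc) hclosed hsubset
  have hcont : Continuous obj :=
    continuous_finset_sum _ fun j _ => continuous_const.mul (continuous_apply j)
  obtain ⟨w, hwF, hwmax⟩ := hcpt.exists_isMaxOn hFne hcont.continuousOn
  -- maximizer of minimal support
  set S : Set ℕ := {m | ∃ u ∈ F, (∀ v ∈ F, obj v ≤ obj u) ∧ {j : Fin n | u j ≠ 0}.ncard = m}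
    with hS
  have hSne : S.Nonempty := ⟨_, w, hwF, fun v hv => hwmax hv, rfl⟩
  have hmem := Nat.sInf_mem hSne
  rw [hS, Set.mem_setOf_eq] at hmem
  obtain ⟨u, huF, humax, hucard⟩ := hmem
  have hmin : ∀ u' ∈ F, (∀ v ∈ F, obj v ≤ obj u') →
      {j : Fin n | u j ≠ 0}.ncard ≤ {j : Fin n | u' j ≠ 0}.ncard := by
    intro u' h1 h2
    rw [hucard]
    exact Nat.sInf_le ⟨u', h1, h2, rfl⟩
  obtain ⟨hu0, hu1, huT⟩ := (hmemF u).mp huF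
  -- perturbation step
  have step : ∀ d : Fin n → ℝ, (∀ j, d j ≠ 0 → u j ≠ 0) → (∀ i, ∑ j ∈ N i, d j = 0) →
      (∑ j : Fin n, t j * d j = 0) → (∃ j, d j < 0) →
      ∃ ε : ℝ, 0 < ε ∧ (fun j => u j + ε * d j) ∈ F ∧
        ∃ j₀, u j₀ ≠ 0 ∧ u j₀ + ε * d j₀ = 0 := by
    intro d hds hdb hdt hneg
    obtain ⟨j₁, hj₁⟩ := hneg
    set s : Finset (Fin n) := Finset.univ.filter (fun j => d j < 0) with hs
    have hsmem : ∀ j, j ∈ s ↔ d j < 0 := by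
      intro j; simp [hs]
    have hsne : s.Nonempty := ⟨j₁, (hsmem j₁).mpr hj₁⟩
    have hupos : ∀ j ∈ s, 0 < u j := fun j hj =>
      lt_of_le_of_ne (hu0 j) (Ne.symm (hds j ((hsmem j).mp hj).ne))
    set ε := s.inf' hsne (fun j => u j / (-(d j))) with hε
    have hεpos : 0 < ε := by
      rw [hε, Finset.lt_inf'_iff]
      exact fun j hj => div_pos (hupos j hj) (neg_pos.mpr ((hsmem j).mp hj))
    have hεle : ∀ j ∈ s, ε ≤ u j / (-(d j)) := fun j hj => Finset.inf'_le _ hj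
    obtain ⟨j₀, hj₀s, hj₀eq⟩ := Finset.exists_mem_eq_inf' hsne (fun j => u j / (-(d j)))
    have hnn : ∀ j, 0 ≤ u j + ε * d j := by
      intro j
      by_cases hj : j ∈ s
      · have hdj : d j < 0 := (hsmem j).mp hj
        have h1 : ε * (-(d j)) ≤ u j := by
          have := (le_div_iff₀ (neg_pos.mpr hdj)).mp (hεle j hj)
          linarith
        linarith
      · have hdj : 0 ≤ d j := not_lt.mp (fun h => hj ((hsmem j).mpr h))
        have : 0 ≤ ε * d j := mul_nonneg hεpos.le hdj
        linarith [hu0 j]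
    refine ⟨ε, hεpos, ?_, j₀, hds j₀ ((hsmem j₀).mp hj₀s).ne, ?_⟩
    · rw [hmemF]
      refine ⟨hnn, ?_, ?_⟩
      · intro i
        rw [Finset.sum_add_distrib, hu1 i, ← Finset.mul_sum, hdb i, mul_zero, add_zero]
      · have hrw : ∑ j : Fin n, t j * (u j + ε * d j) =
            (∑ j : Fin n, t j * u j) + ε * ∑ j : Fin n, t j * d j := by
          rw [Finset.mul_sum, ← Finset.sum_add_distrib]
          exact Finset.sum_congr rfl fun j _ => by ring
        rw [hrw, hdt, mul_zero, add_zero]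
        exact huT
    · have hdj₀ : d j₀ < 0 := (hsmem j₀).mp hj₀s
      have hne0 : d j₀ ≠ 0 := hdj₀.ne
      rw [hε, hj₀eq]
      field_simp
      ring
  -- no nonzero feasible direction
  have key : ∀ d : Fin n → ℝ, (∀ j, d j ≠ 0 → u j ≠ 0) → (∀ i, ∑ j ∈ N i, d j = 0) →
      (∑ j : Fin n, t j * d j = 0) → (∀ j, d j = 0) := by
    intro d hds hdb hdt
    by_contra hne
    push_neg at hne
    obtain ⟨j₁, hj₁⟩ := hne
    obtain ⟨i₁, hi₁⟩ := hNcover j₁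
    have hneg : ∃ j, d j < 0 := by
      by_contra h
      push_neg at h
      exact hj₁ ((Finset.sum_eq_zero_iff_of_nonneg (fun j _ => h j)).mp (hdb i₁) j₁ hi₁)
    have hpos : ∃ j, d j > 0 := by
      by_contra h
      push_neg at h
      exact hj₁ ((Finset.sum_eq_zero_iff_of_nonpos (fun j _ => h j)).mp (hdb i₁) j₁ hi₁)
    obtain ⟨ε₁, hε₁pos, hF₁, j₀, hj₀ne, hj₀z⟩ := step d hds hdb hdt hneg
    have hd2 : ∃ ε : ℝ, 0 < ε ∧ (fun j => u j + ε * (-(d j))) ∈ F ∧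
        ∃ j₀, u j₀ ≠ 0 ∧ u j₀ + ε * (-(d j₀)) = 0 := by
      refine step (fun j => -(d j)) (fun j h => hds j (by simpa using h))
        (fun i => by rw [Finset.sum_neg_distrib, hdb i, neg_zero]) ?_ ?_
      · have : ∑ j : Fin n, t j * (-(d j)) = -∑ j : Fin n, t j * d j := by
          rw [← Finset.sum_neg_distrib]
          exact Finset.sum_congr rfl fun j _ => by ring
        rw [this, hdt, neg_zero]
      · obtain ⟨j, hj⟩ := hpos
        exact ⟨j, by simpa using hj⟩
    obtain ⟨ε₂, hε₂pos, hF₂, -⟩ := hd2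
    have e1 : obj (fun j => u j + ε₁ * d j) = obj u + ε₁ * ∑ j : Fin n, p j * d j := by
      simp only [hobj]
      rw [Finset.mul_sum, ← Finset.sum_add_distrib]
      exact Finset.sum_congr rfl fun j _ => by ring
    have e2 : obj (fun j => u j + ε₂ * (-(d j))) = obj u - ε₂ * ∑ j : Fin n, p j * d j := by
      simp only [hobj]
      rw [Finset.mul_sum, sub_eq_add_neg, ← Finset.sum_neg_distrib, ← Finset.sum_add_distrib]
      exact Finset.sum_congr rfl fun j _ => by ring
    have h1 : obj u + ε₁ * ∑ j : Fin n, p j * d j ≤ obj u := by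
      rw [← e1]; exact humax _ hF₁
    have h2 : obj u - ε₂ * ∑ j : Fin n, p j * d j ≤ obj u := by
      rw [← e2]; exact humax _ hF₂
    have hpd : ∑ j : Fin n, p j * d j = 0 := by
      have hX1 : ∑ j : Fin n, p j * d j ≤ 0 := by nlinarith
      have hX2 : 0 ≤ ∑ j : Fin n, p j * d j := by nlinarith
      linarith
    -- u + ε₁ d is also a maximizer, with strictly smaller support
    have hu'max : ∀ v ∈ F, obj v ≤ obj (fun j => u j + ε₁ * d j) := by
      intro v hv
      rw [e1, hpd, mul_zero, add_zero]
      exact humax v hv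
    have hssub : {j : Fin n | (fun j => u j + ε₁ * d j) j ≠ 0} ⊂ {j : Fin n | u j ≠ 0} := by
      constructor
      · intro j hj
        simp only [Set.mem_setOf_eq] at hj ⊢
        intro h0
        apply hj
        have hd0 : d j = 0 := by
          by_contra hd
          exact hds j hd h0
        simp [h0, hd0]
      · intro hsup
        have := hsup hj₀ne
        simp only [Set.mem_setOf_eq] at this
        exact this hj₀z
    have hlt := Set.ncard_lt_ncard hssub (Set.toFinite _)
    have hge := hmin _ hF₁ hu'max
    exact absurd hge (not_le.mpr hlt)
  -- block supports
  have hne1 : ∀ i : Fin k, 1 ≤ {j : Fin n | j ∈ N i ∧ u j ≠ 0}.ncard := by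
    intro i
    refine (Set.ncard_pos (Set.toFinite _)).mpr ?_
    by_contra h
    rw [Set.not_nonempty_iff_eq_empty] at h
    have hz : ∑ j ∈ N i, u j = 0 := Finset.sum_eq_zero fun j hj => by
      by_contra h0
      exact Set.eq_empty_iff_forall_notMem.mp h j ⟨hj, h0⟩
    rw [hu1 i] at hz
    norm_num at hz
  have claimA : ∀ i : Fin k, {j : Fin n | j ∈ N i ∧ u j ≠ 0}.ncard ≤ 2 := by
    intro i
    by_contra hlt
    push_neg at hlt
    obtain ⟨j₁, hj₁, j₂, hj₂, j₃, hj₃, h12, h13, h23⟩ :=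
      (Set.two_lt_ncard (Set.toFinite _)).mp hlt
    simp only [Set.mem_setOf_eq] at hj₁ hj₂ hj₃
    obtain ⟨c₁, c₂, c₃, hsum0, htsum0, hcne⟩ : ∃ c₁ c₂ c₃ : ℝ,
        c₁ + c₂ + c₃ = 0 ∧ t j₁ * c₁ + t j₂ * c₂ + t j₃ * c₃ = 0 ∧
        ¬(c₁ = 0 ∧ c₂ = 0 ∧ c₃ = 0) := by
      by_cases h : t j₁ = t j₂
      · exact ⟨1, -1, 0, by ring, by rw [h]; ring, by simp⟩
      · exact ⟨t j₂ - t j₃, t j₃ - t j₁, t j₁ - t j₂, by ring, by ring,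
          fun ⟨_, _, h3⟩ => h (by linarith [sub_eq_zero.mp h3])⟩
    set d : Fin n → ℝ := fun j =>
      (if j = j₁ then c₁ else 0) + (if j = j₂ then c₂ else 0) + (if j = j₃ then c₃ else 0)
      with hd
    have hblocks : ∀ i' : Fin k, ∑ j ∈ N i', d j =
        (if j₁ ∈ N i' then c₁ else 0) + (if j₂ ∈ N i' then c₂ else 0) +
        (if j₃ ∈ N i' then c₃ else 0) := by
      intro i'
      simp only [hd, Finset.sum_add_distrib, Finset.sum_ite_eq']
    have hall : ∀ j, d j = 0 := by
      refine key d ?_ ?_ ?_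
      · intro j hdj
        by_cases e1 : j = j₁
        · subst e1; exact hj₁.2
        by_cases e2 : j = j₂
        · subst e2; exact hj₂.2
        by_cases e3 : j = j₃
        · subst e3; exact hj₃.2
        exact absurd (by simp [hd, e1, e2, e3]) hdj
      · intro i'
        rw [hblocks i']
        by_cases hii : i' = i
        · subst hii
          rw [if_pos hj₁.1, if_pos hj₂.1, if_pos hj₃.1]
          exact hsum0
        · rw [if_neg (fun hmem => hii (huni hmem hj₁.1)),
            if_neg (fun hmem => hii (huni hmem hj₂.1)),
            if_neg (fun hmem => hii (huni hmem hj₃.1))]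
          ring
      · simp only [hd, mul_add, mul_ite, mul_zero, Finset.sum_add_distrib,
          Finset.sum_ite_eq', Finset.mem_univ, if_true]
        exact htsum0
    refine hcne ⟨?_, ?_, ?_⟩
    · have := hall j₁; simpa [hd, h12, h13] using this
    · have := hall j₂; simpa [hd, h12.symm, h23] using this
    · have := hall j₃; simpa [hd, h13.symm, h23.symm] using this
  have claimB : ∀ i i' : Fin k, i ≠ i' → 1 < {j : Fin n | j ∈ N i ∧ u j ≠ 0}.ncard →
      1 < {j : Fin n | j ∈ N i' ∧ u j ≠ 0}.ncard → False := by
    intro i i' hii' hi hi'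
    obtain ⟨j₁, hj₁, j₂, hj₂, h12⟩ := (Set.one_lt_ncard (Set.toFinite _)).mp hi
    obtain ⟨j₃, hj₃, j₄, hj₄, h34⟩ := (Set.one_lt_ncard (Set.toFinite _)).mp hi'
    simp only [Set.mem_setOf_eq] at hj₁ hj₂ hj₃ hj₄
    have hcross : ∀ {a b : Fin n}, a ∈ N i → b ∈ N i' → a ≠ b :=
      fun ha hb hab => hii' (huni ha (hab ▸ hb))
    have h13 : j₁ ≠ j₃ := hcross hj₁.1 hj₃.1
    have h14 : j₁ ≠ j₄ := hcross hj₁.1 hj₄.1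
    have h23 : j₂ ≠ j₃ := hcross hj₂.1 hj₃.1
    have h24 : j₂ ≠ j₄ := hcross hj₂.1 hj₄.1
    obtain ⟨a, b, htsum0, hcne⟩ : ∃ a b : ℝ,
        t j₁ * a + t j₂ * (-a) + t j₃ * b + t j₄ * (-b) = 0 ∧ ¬(a = 0 ∧ b = 0) := by
      by_cases h : t j₁ = t j₂
      · exact ⟨1, 0, by rw [h]; ring, by simp⟩
      · exact ⟨t j₃ - t j₄, t j₂ - t j₁, by ring,
          fun ⟨_, hb⟩ => h (by linarith [sub_eq_zero.mp hb])⟩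
    set d : Fin n → ℝ := fun j =>
      (if j = j₁ then a else 0) + (if j = j₂ then -a else 0) +
      (if j = j₃ then b else 0) + (if j = j₄ then -b else 0) with hd
    have hblocks : ∀ i'' : Fin k, ∑ j ∈ N i'', d j =
        (if j₁ ∈ N i'' then a else 0) + (if j₂ ∈ N i'' then -a else 0) +
        (if j₃ ∈ N i'' then b else 0) + (if j₄ ∈ N i'' then -b else 0) := by
      intro i''
      simp only [hd, Finset.sum_add_distrib, Finset.sum_ite_eq']
    have hall : ∀ j, d j = 0 := by
      refine key d ?_ ?_ ?_
      · intro j hdj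
        by_cases e1 : j = j₁
        · subst e1; exact hj₁.2
        by_cases e2 : j = j₂
        · subst e2; exact hj₂.2
        by_cases e3 : j = j₃
        · subst e3; exact hj₃.2
        by_cases e4 : j = j₄
        · subst e4; exact hj₄.2
        exact absurd (by simp [hd, e1, e2, e3, e4]) hdj
      · intro i''
        rw [hblocks i'']
        by_cases e : i'' = i
        · subst e
          rw [if_pos hj₁.1, if_pos hj₂.1,
            if_neg (fun hmem => hii' (huni hmem hj₃.1)),
            if_neg (fun hmem => hii' (huni hmem hj₄.1))]
          ring
        by_cases e' : i'' = i'
        · subst e'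
          rw [if_neg (fun hmem => hii' (huni hj₁.1 hmem)),
            if_neg (fun hmem => hii' (huni hj₂.1 hmem)),
            if_pos hj₃.1, if_pos hj₄.1]
          ring
        · rw [if_neg (fun hmem => e (huni hmem hj₁.1)),
            if_neg (fun hmem => e (huni hmem hj₂.1)),
            if_neg (fun hmem => e' (huni hmem hj₃.1)),
            if_neg (fun hmem => e' (huni hmem hj₄.1))]
          ring
      · simp only [hd, mul_add, mul_ite, mul_zero, Finset.sum_add_distrib,
          Finset.sum_ite_eq', Finset.mem_univ, if_true]
        exact htsum0
    refine hcne ⟨?_, ?_⟩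
    · have := hall j₁; simpa [hd, h12, h13, h14] using this
    · have := hall j₃; simpa [hd, h13.symm, h23.symm, h34] using this
  refine ⟨u, huF, ?_, ?_⟩
  · intro v hv
    rw [hsum (fun j => p j * v j), hsum (fun j => p j * u j)]
    exact humax v hv
  · by_cases H : ∃ i : Fin k, 1 < {j : Fin n | j ∈ N i ∧ u j ≠ 0}.ncard
    · obtain ⟨i₀, hi₀⟩ := H
      refine ⟨i₀, ?_, claimA i₀⟩
      intro i hne
      have h2 : ¬ 1 < {j : Fin n | j ∈ N i ∧ u j ≠ 0}.ncard := fun h => claimB i i₀ hne h hi₀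
      exact le_antisymm (not_lt.mp h2) (hne1 i)
    · push_neg at H
      refine ⟨⟨0, hk⟩, fun i _ => ?_, ?_⟩
      · exact le_antisymm (H i) (hne1 i)
      · exact le_trans (H ⟨0, hk⟩) one_le_two
end

section
/- Consider the relaxed Multiple Choice Knapsack Problem with nonempty feasible set F. If the objective u ↦ Σ_{i=1}^k Σ_{j∈N_i} p_{ij} u_{ij} has a unique maximizer u* over F, then every block of u* is one-hot except at most one block, and that exceptional block has at most two nonzero entries. -/
/-!
Relaxed Multiple Choice Knapsack Problem (MCKP).
If the linear objective has a unique maximizer u* over the (nonempty) feasible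
set, then every block of u* is one-hot except at most one block, and that
exceptional block has at most two nonzero entries.
-/

theorem mckp_unique_maximizer_one_hot_except_one_block_two_nonzeros
    (k n : ℕ) (hk : 1 ≤ k) (hn : 1 ≤ n)
    (N : Fin k → Finset (Fin n))
    (hNne : ∀ i, (N i).Nonempty)
    (hNdisj : ∀ i i' : Fin k, i ≠ i' → Disjoint (N i) (N i'))
    (hNcover : ∀ j : Fin n, ∃ i : Fin k, j ∈ N i)
    (p t : Fin n → ℝ) (T : ℝ)
    (F : Set (Fin n → ℝ))
    (hF : F = {u : Fin n → ℝ |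
      (∀ j, 0 ≤ u j) ∧ (∀ i, ∑ j ∈ N i, u j = 1) ∧
      ∑ i : Fin k, ∑ j ∈ N i, t j * u j ≤ T})
    (hFne : F.Nonempty)
    (u : Fin n → ℝ) (hu : u ∈ F)
    (hmax : ∀ v ∈ F, ∑ i : Fin k, ∑ j ∈ N i, p j * v j ≤
        ∑ i : Fin k, ∑ j ∈ N i, p j * u j)
    (huniq : ∀ v ∈ F, (∑ i : Fin k, ∑ j ∈ N i, p j * v j =
        ∑ i : Fin k, ∑ j ∈ N i, p j * u j) → v = u) :
    ∃ i₀ : Fin k,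
      (∀ i : Fin k, i ≠ i₀ → {j : Fin n | j ∈ N i ∧ u j ≠ 0}.ncard = 1) ∧
      {j : Fin n | j ∈ N i₀ ∧ u j ≠ 0}.ncard ≤ 2 := by
  subst hF
  obtain ⟨hupos, husum, hut⟩ := hu
  haveI : Nonempty (Fin n) := Fin.pos_iff_nonempty.mp hn
  -- Key perturbation lemma: any direction supported on positive coordinates,
  -- with zero block sums and zero budget sum, must be zero.
  have key : ∀ d : Fin n → ℝ, (∀ j, d j ≠ 0 → u j ≠ 0) →
      (∀ i, ∑ j ∈ N i, d j = 0) →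
      (∑ i : Fin k, ∑ j ∈ N i, t j * d j = 0) →
      d = 0 := by
    intro d hsupp hbsum htsum
    set g : Fin n → ℝ := fun j => if d j = 0 then 1 else u j / |d j| with hg
    have hgpos : ∀ j, 0 < g j := by
      intro j
      by_cases hdj : d j = 0
      · simp [hg, hdj]
      · have huj : 0 < u j := lt_of_le_of_ne (hupos j) (Ne.symm (hsupp j hdj))
        have habs : 0 < |d j| := abs_pos.mpr hdj
        simp [hg, hdj, div_pos huj habs]
    set ε : ℝ := Finset.univ.inf' Finset.univ_nonempty g with hε
    have hεpos : 0 < ε := by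
      rw [hε, Finset.lt_inf'_iff]
      intro j _
      exact hgpos j
    have hbound : ∀ j, ε * |d j| ≤ u j := by
      intro j
      by_cases hdj : d j = 0
      · simp [hdj, hupos j]
      · have h1 : ε ≤ g j := Finset.inf'_le _ (Finset.mem_univ j)
        have h2 : g j = u j / |d j| := by simp [hg, hdj]
        have habs : 0 < |d j| := abs_pos.mpr hdj
        rw [h2] at h1
        calc ε * |d j| ≤ (u j / |d j|) * |d j| :=
              mul_le_mul_of_nonneg_right h1 (abs_nonneg _)
          _ = u j := div_mul_cancel₀ _ (ne_of_gt habs)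
    have lin : ∀ (f : Fin n → ℝ) (c : ℝ),
        ∑ i : Fin k, ∑ j ∈ N i, f j * (u j + c * d j)
          = (∑ i : Fin k, ∑ j ∈ N i, f j * u j)
            + c * ∑ i : Fin k, ∑ j ∈ N i, f j * d j := by
      intro f c
      simp [mul_add, Finset.sum_add_distrib, Finset.mul_sum, mul_left_comm]
    have hmem : ∀ c : ℝ, |c| ≤ ε → (fun j => u j + c * d j) ∈
        {u : Fin n → ℝ | (∀ j, 0 ≤ u j) ∧ (∀ i, ∑ j ∈ N i, u j = 1) ∧
          ∑ i : Fin k, ∑ j ∈ N i, t j * u j ≤ T} := by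
      intro c hc
      refine ⟨?_, ?_, ?_⟩
      · intro j
        have h1 : |c * d j| ≤ ε * |d j| := by
          rw [abs_mul]
          exact mul_le_mul_of_nonneg_right hc (abs_nonneg _)
        have h2 : -(c * d j) ≤ |c * d j| := neg_le_abs _
        have := hbound j
        simp only
        linarith
      · intro i
        rw [Finset.sum_add_distrib, husum i, ← Finset.mul_sum, hbsum i]
        ring
      · simp only
        rw [lin t c, htsum]
        linarith [hut]
    have hSd : (∑ i : Fin k, ∑ j ∈ N i, p j * d j) = 0 := by
      have h1 := hmax _ (hmem ε (le_of_eq (abs_of_pos hεpos)))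
      have h2 := hmax _ (hmem (-ε) (le_of_eq (by rw [abs_neg, abs_of_pos hεpos])))
      rw [lin p ε] at h1
      rw [lin p (-ε)] at h2
      nlinarith [hεpos]
    have heq := huniq _ (hmem ε (le_of_eq (abs_of_pos hεpos)))
      (by rw [lin p ε, hSd]; ring)
    funext j
    have h := congrFun heq j
    have hz : ε * d j = 0 := by linarith
    have : d j = 0 := by
      rcases mul_eq_zero.mp hz with h' | h'
      · exact absurd h' hεpos.ne'
      · exact h'
    simpa using this
  -- each point belongs to a unique block
  have memuniq : ∀ {a : Fin n} {i i' : Fin k}, a ∈ N i → a ∈ N i' → i = i' := by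
    intro a i i' hi hi'
    by_contra hne
    exact Finset.disjoint_left.mp (hNdisj i i' hne) hi hi'
  have sumover : ∀ (a : Fin n) (ia : Fin k), a ∈ N ia → ∀ f : Fin k → ℝ,
      (∑ i : Fin k, if a ∈ N i then f i else 0) = f ia := by
    intro a ia ha f
    rw [Finset.sum_eq_single ia]
    · simp [ha]
    · intro i _ hne
      have : a ∉ N i := fun h => hne (memuniq h ha)
      simp [this]
    · intro h
      exact absurd (Finset.mem_univ ia) h
  have hsum1 : ∀ (s : Finset (Fin n)) (x : Fin n) (α : ℝ),
      (∑ j ∈ s, α * (if j = x then (1:ℝ) else 0)) = if x ∈ s then α else 0 := by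
    intro s x α
    simp [mul_ite, Finset.sum_ite_eq']
  have hsum2 : ∀ (s : Finset (Fin n)) (x : Fin n) (α : ℝ) (f : Fin n → ℝ),
      (∑ j ∈ s, f j * (α * (if j = x then (1:ℝ) else 0)))
        = if x ∈ s then f x * α else 0 := by
    intro s x α f
    simp [mul_ite, Finset.sum_ite_eq']
  -- perturbation by a 4-point combination
  have pert : ∀ (a b c e : Fin n) (ia ib ic ie : Fin k) (α β γ δ : ℝ),
      a ∈ N ia → b ∈ N ib → c ∈ N ic → e ∈ N ie →
      u a ≠ 0 → u b ≠ 0 → u c ≠ 0 → u e ≠ 0 →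
      (∀ i : Fin k, (if a ∈ N i then α else 0) + (if b ∈ N i then β else 0)
        + (if c ∈ N i then γ else 0) + (if e ∈ N i then δ else 0) = 0) →
      t a * α + t b * β + t c * γ + t e * δ = 0 →
      ∀ j, α * (if j = a then (1:ℝ) else 0) + β * (if j = b then (1:ℝ) else 0)
        + γ * (if j = c then (1:ℝ) else 0) + δ * (if j = e then (1:ℝ) else 0) = 0 := by
    intro a b c e ia ib ic ie α β γ δ ha hb hc he hua hub huc hue hblock ht j
    have hd0 : (fun j => α * (if j = a then (1:ℝ) else 0) + β * (if j = b then (1:ℝ) else 0)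
        + γ * (if j = c then (1:ℝ) else 0) + δ * (if j = e then (1:ℝ) else 0)) = 0 := by
      apply key
      · intro j hdj
        by_cases h1 : j = a
        · subst h1; exact hua
        by_cases h2 : j = b
        · subst h2; exact hub
        by_cases h3 : j = c
        · subst h3; exact huc
        by_cases h4 : j = e
        · subst h4; exact hue
        exfalso
        apply hdj
        simp [h1, h2, h3, h4]
      · intro i
        rw [Finset.sum_add_distrib, Finset.sum_add_distrib, Finset.sum_add_distrib,
          hsum1, hsum1, hsum1, hsum1]
        exact hblock i
      · have hinner : ∀ i : Fin k,
            (∑ j ∈ N i, t j * (α * (if j = a then (1:ℝ) else 0)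
              + β * (if j = b then (1:ℝ) else 0)
              + γ * (if j = c then (1:ℝ) else 0) + δ * (if j = e then (1:ℝ) else 0)))
            = (if a ∈ N i then t a * α else 0) + (if b ∈ N i then t b * β else 0)
              + (if c ∈ N i then t c * γ else 0) + (if e ∈ N i then t e * δ else 0) := by
          intro i
          simp only [mul_add]
          rw [Finset.sum_add_distrib, Finset.sum_add_distrib, Finset.sum_add_distrib,
            hsum2, hsum2, hsum2, hsum2]
        rw [Finset.sum_congr rfl (fun i _ => hinner i)]
        rw [Finset.sum_add_distrib, Finset.sum_add_distrib, Finset.sum_add_distrib,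
          sumover a ia ha, sumover b ib hb, sumover c ic hc, sumover e ie he]
        linarith [ht]
    simpa using congrFun hd0 j
  -- translate ncard to Finset card
  have hcard : ∀ i : Fin k, {j : Fin n | j ∈ N i ∧ u j ≠ 0}.ncard
      = ((N i).filter (fun j => u j ≠ 0)).card := by
    intro i
    rw [← Set.ncard_coe_finset]
    congr 1
    ext j
    simp [Finset.mem_filter]
  have hpos : ∀ i : Fin k, 0 < ((N i).filter (fun j => u j ≠ 0)).card := by
    intro i
    rw [Finset.card_pos]
    by_contra h
    rw [Finset.not_nonempty_iff_eq_empty, Finset.filter_eq_empty_iff] at h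
    have hz : ∑ j ∈ N i, u j = 0 := Finset.sum_eq_zero (fun j hj => by
      have := h hj; push_neg at this; exact this)
    rw [husum i] at hz
    norm_num at hz
  -- no block has three or more nonzero entries
  have h3 : ∀ i : Fin k, ((N i).filter (fun j => u j ≠ 0)).card ≤ 2 := by
    intro i
    by_contra h
    push_neg at h
    rw [Finset.two_lt_card_iff] at h
    obtain ⟨a, b, c, ha, hb, hc, hab, hac, hbc⟩ := h
    rw [Finset.mem_filter] at ha hb hc
    obtain ⟨haN, hua⟩ := ha
    obtain ⟨hbN, hub⟩ := hb
    obtain ⟨hcN, huc⟩ := hc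
    by_cases htt : t a = t b
    · have hp := pert a b c a i i i i 1 (-1) 0 0 haN hbN hcN haN hua hub huc hua
        (fun i' => by
          by_cases hii : i' = i
          · subst hii
            rw [if_pos haN, if_pos hbN, if_pos hcN, if_pos haN]
            ring
          · have hA : a ∉ N i' := fun h' => hii (memuniq h' haN)
            have hB : b ∉ N i' := fun h' => hii (memuniq h' hbN)
            have hC : c ∉ N i' := fun h' => hii (memuniq h' hcN)
            rw [if_neg hA, if_neg hB, if_neg hC, if_neg hA]
            ring)
        (by rw [htt]; ring)
      have := hp a
      rw [if_pos rfl, if_neg hab, if_neg hac] at this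
      norm_num at this
    · have hp := pert a b c a i i i i (t b - t c) (t c - t a) (t a - t b) 0
        haN hbN hcN haN hua hub huc hua
        (fun i' => by
          by_cases hii : i' = i
          · subst hii
            rw [if_pos haN, if_pos hbN, if_pos hcN, if_pos haN]
            ring
          · have hA : a ∉ N i' := fun h' => hii (memuniq h' haN)
            have hB : b ∉ N i' := fun h' => hii (memuniq h' hbN)
            have hC : c ∉ N i' := fun h' => hii (memuniq h' hcN)
            rw [if_neg hA, if_neg hB, if_neg hC, if_neg hA]
            ring)
        (by ring)
      have := hp c
      rw [if_neg (Ne.symm hac), if_neg (Ne.symm hbc), if_pos rfl] at this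
      apply htt
      nlinarith [this]
  -- two distinct blocks cannot both have two or more nonzero entries
  have h2 : ∀ i i' : Fin k, i ≠ i' →
      1 < ((N i).filter (fun j => u j ≠ 0)).card →
      1 < ((N i').filter (fun j => u j ≠ 0)).card → False := by
    intro i i' hne hgt hgt'
    rw [Finset.one_lt_card_iff] at hgt hgt'
    obtain ⟨a, b, ha, hb, hab⟩ := hgt
    obtain ⟨c, e, hc, he, hce⟩ := hgt'
    rw [Finset.mem_filter] at ha hb hc he
    obtain ⟨haN, hua⟩ := ha
    obtain ⟨hbN, hub⟩ := hb
    obtain ⟨hcN, huc⟩ := hc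
    obtain ⟨heN, hue⟩ := he
    have hac : a ≠ c := fun h => hne (memuniq haN (h ▸ hcN))
    have hae : a ≠ e := fun h => hne (memuniq haN (h ▸ heN))
    have hbc : b ≠ c := fun h => hne (memuniq hbN (h ▸ hcN))
    have hbe : b ≠ e := fun h => hne (memuniq hbN (h ▸ heN))
    have hCnoti : c ∉ N i := fun h => hne (memuniq h hcN)
    have hEnoti : e ∉ N i := fun h => hne (memuniq h heN)
    have hAnoti' : a ∉ N i' := fun h => hne (memuniq haN h)
    have hBnoti' : b ∉ N i' := fun h => hne (memuniq hbN h)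
    have hblockgen : ∀ (α β γ δ : ℝ), α + β = 0 → γ + δ = 0 →
        ∀ i'' : Fin k, (if a ∈ N i'' then α else 0) + (if b ∈ N i'' then β else 0)
          + (if c ∈ N i'' then γ else 0) + (if e ∈ N i'' then δ else 0) = 0 := by
      intro α β γ δ h1 h2 i''
      by_cases hii : i'' = i
      · subst hii
        rw [if_pos haN, if_pos hbN, if_neg hCnoti, if_neg hEnoti]
        linarith
      by_cases hii' : i'' = i'
      · subst hii'
        rw [if_neg hAnoti', if_neg hBnoti', if_pos hcN, if_pos heN]
        linarith
      · have hA : a ∉ N i'' := fun h' => hii (memuniq h' haN)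
        have hB : b ∉ N i'' := fun h' => hii (memuniq h' hbN)
        have hC : c ∉ N i'' := fun h' => hii' (memuniq h' hcN)
        have hE : e ∉ N i'' := fun h' => hii' (memuniq h' heN)
        rw [if_neg hA, if_neg hB, if_neg hC, if_neg hE]
        ring
    by_cases htt : t a = t b
    · have hp := pert a b c e i i i' i' 1 (-1) 0 0 haN hbN hcN heN hua hub huc hue
        (hblockgen 1 (-1) 0 0 (by ring) (by ring))
        (by rw [htt]; ring)
      have := hp a
      rw [if_pos rfl, if_neg hab, if_neg hac, if_neg hae] at this
      norm_num at this
    · have hp := pert a b c e i i i' i' (t c - t e) (-(t c - t e)) (-(t a - t b)) (t a - t b)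
        haN hbN hcN heN hua hub huc hue
        (hblockgen _ _ _ _ (by ring) (by ring))
        (by ring)
      have := hp e
      rw [if_neg (Ne.symm hae), if_neg (Ne.symm hbe), if_neg (Ne.symm hce), if_pos rfl] at this
      apply htt
      nlinarith [this]
  -- conclusion
  by_cases hex : ∃ i : Fin k, 1 < ((N i).filter (fun j => u j ≠ 0)).card
  · obtain ⟨i₀, hi₀⟩ := hex
    refine ⟨i₀, ?_, ?_⟩
    · intro i hne
      rw [hcard]
      have hle : ¬ 1 < ((N i).filter (fun j => u j ≠ 0)).card :=
        fun h => h2 i i₀ hne h hi₀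
      have := hpos i
      omega
    · rw [hcard]
      exact h3 i₀
  · push_neg at hex
    refine ⟨⟨0, hk⟩, ?_, ?_⟩
    · intro i _
      rw [hcard]
      have := hex i
      have := hpos i
      omega
    · rw [hcard]
      have := hex ⟨0, hk⟩
      omega
end

section
/- Every extreme point u of the feasible set F of the relaxed Multiple Choice Knapsack Problem has the property that all of its blocks u_i are one-hot except at most one, and the exceptional block has at most two nonzero entries. -/
/-!
An extreme point `u` admits no nonzero direction `d`, supported where `u > 0`, that keeps all
block sums and the cost fixed: `u + ε d` and `u - ε d` would both be feasible for small `ε > 0`.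
Hence the images in `ℝ^k × ℝ` (block sums, cost) of the unit vectors `e_j`, `j` in the support
of `u`, are linearly independent, so `u` has at most `k + 1` nonzero entries. Every block carries
at least one of them, since its entries sum to `1`, so only one surplus entry is left to share.
-/

open Finset Filter Topology Function

theorem eq_zero_of_mem_extremePoints_of_add_mem_of_sub_mem {𝕜 E : Type*} [Field 𝕜] [LinearOrder 𝕜]
    [IsStrictOrderedRing 𝕜] [AddCommGroup E] [Module 𝕜 E] {A : Set E} {x y : E}
    (hx : x ∈ A.extremePoints 𝕜) (hadd : x + y ∈ A) (hsub : x - y ∈ A) : y = 0 := by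
  have hmid : x ∈ openSegment 𝕜 (x + y) (x - y) :=
    ⟨1 / 2, 1 / 2, by norm_num, by norm_num, by norm_num, by module⟩
  simpa using hx.2 hadd hsub hmid

theorem exists_pos_nonneg_add_smul_and_sub_smul {ι : Type*} [Finite ι] {u d : ι → ℝ}
    (hu : 0 ≤ u) (hd : ∀ j, d j ≠ 0 → u j ≠ 0) :
    ∃ ε : ℝ, 0 < ε ∧ 0 ≤ u + ε • d ∧ 0 ≤ u - ε • d := by
  have hnear : ∀ᶠ s in 𝓝 (0 : ℝ), 0 ≤ u + s • d := by
    simp only [Pi.le_def, Pi.add_apply, Pi.smul_apply, smul_eq_mul, Pi.zero_apply]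
    refine eventually_all.2 fun j => ?_
    by_cases hdj : d j = 0
    · simpa [hdj] using hu j
    have hpos : 0 < u j + 0 * d j := by simpa using (hu j).lt_of_ne' (hd j hdj)
    exact ((continuous_const.add (continuous_id.mul continuous_const)).tendsto 0).eventually
      (eventually_gt_nhds hpos) |>.mono fun _ => le_of_lt
  obtain ⟨δ, hδ, hball⟩ := Metric.eventually_nhds_iff.1 hnear
  have hsmall : ∀ s : ℝ, |s| = δ / 2 → 0 ≤ u + s • d := fun s hs =>
    hball (by rw [Real.dist_eq, sub_zero, hs]; linarith)
  refine ⟨δ / 2, by positivity, hsmall _ (abs_of_pos (by positivity)), ?_⟩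
  simpa [sub_eq_add_neg] using hsmall (-(δ / 2)) (by rw [abs_neg, abs_of_pos (by positivity)])

theorem linearIndependent_apply_single_of_mem_extremePoints {ι V : Type*} [Fintype ι]
    [DecidableEq ι] [AddCommGroup V] [Module ℝ V] {F : Set (ι → ℝ)} {u : ι → ℝ}
    (hu : u ∈ F.extremePoints ℝ) (hu₀ : 0 ≤ u) (L : (ι → ℝ) →ₗ[ℝ] V)
    (hF : ∀ d, L d = 0 → 0 ≤ u + d → u + d ∈ F) :
    LinearIndependent ℝ fun j : {j // u j ≠ 0} => L (Pi.single j 1) := by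
  rw [Fintype.linearIndependent_iff]
  intro g hg
  set d : ι → ℝ := ∑ j, g j • Pi.single (j : ι) 1
  have hd_apply : ∀ j : {j // u j ≠ 0}, d j = g j := fun j => by
    simp [d, Pi.single_apply, Subtype.val_inj]
  have hd_supp : ∀ j, d j ≠ 0 → u j ≠ 0 := fun j hj huj => hj <| by
    simp only [d, Finset.sum_apply, Pi.smul_apply, Pi.single_apply, smul_eq_mul]
    exact sum_eq_zero fun i _ => by rw [if_neg (by rintro rfl; exact i.2 huj), mul_zero]
  have hLd : L d = 0 := by simpa [d, map_sum, map_smul] using hg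
  obtain ⟨ε, hε, hadd, hsub⟩ := exists_pos_nonneg_add_smul_and_sub_smul hu₀ hd_supp
  have hεd : ε • d = 0 := eq_zero_of_mem_extremePoints_of_add_mem_of_sub_mem hu
    (hF _ (by simp [hLd]) hadd) (by rw [sub_eq_add_neg] at hsub ⊢; exact hF _ (by simp [hLd]) hsub)
  intro j
  rw [← hd_apply, (smul_eq_zero.1 hεd).resolve_left hε.ne', Pi.zero_apply]

theorem card_support_le_finrank_of_mem_extremePoints {ι V : Type*} [Fintype ι]
    [AddCommGroup V] [Module ℝ V] [FiniteDimensional ℝ V] {F : Set (ι → ℝ)} {u : ι → ℝ}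
    (hu : u ∈ F.extremePoints ℝ) (hu₀ : 0 ≤ u) (L : (ι → ℝ) →ₗ[ℝ] V)
    (hF : ∀ d, L d = 0 → 0 ≤ u + d → u + d ∈ F) :
    Fintype.card {j // u j ≠ 0} ≤ Module.finrank ℝ V := by
  classical
  exact (linearIndependent_apply_single_of_mem_extremePoints hu hu₀ L hF).fintype_card_le_finrank

theorem Finset.sum_card_filter_le_card_filter {ι κ : Type*} [Fintype ι] [DecidableEq ι]
    [Fintype κ] {N : κ → Finset ι} (hN : Pairwise (Disjoint on N)) (p : ι → Prop)
    [DecidablePred p] :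
    ∑ i, #{j ∈ N i | p j} ≤ #{j | p j} := by
  rw [← card_biUnion fun i _ i' _ h => (hN h).mono (filter_subset _ _) (filter_subset _ _)]
  exact card_le_card fun j hj => by simp_all

theorem exists_forall_ne_eq_one_and_le_two {κ : Type*} [Fintype κ] [Nonempty κ] {c : κ → ℕ}
    (hc : ∀ i, 1 ≤ c i) (hsum : ∑ i, c i ≤ Fintype.card κ + 1) :
    ∃ i₀, (∀ i ≠ i₀, c i = 1) ∧ c i₀ ≤ 2 := by
  classical
  have hexcess : ∑ i, (c i - 1) ≤ 1 := by
    have : ∑ i, (c i - 1) + Fintype.card κ = ∑ i, c i := by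
      rw [Fintype.card_eq_sum_ones, ← sum_add_distrib]
      exact sum_congr rfl fun i _ => Nat.sub_add_cancel (hc i)
    omega
  obtain ⟨i₀, hmax⟩ := Finite.exists_max c
  refine ⟨i₀, fun i hi => ?_, ?_⟩
  · have := (sum_pair hi).symm.trans_le <|
      sum_le_sum_of_subset (f := fun i => c i - 1) (subset_univ {i, i₀})
    have := hmax i
    have := hc i
    omega
  · have := single_le_sum (f := fun i => c i - 1) (fun i _ => Nat.zero_le _) (mem_univ i₀)
    omega

section MCKP

variable {ι κ : Type*} [Fintype κ] (N : κ → Finset ι) (t : ι → ℝ) (T : ℝ)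

def mckpFeasibleSet : Set (ι → ℝ) :=
  {u | (∀ j, 0 ≤ u j) ∧ (∀ i, ∑ j ∈ N i, u j = 1) ∧ ∑ i, ∑ j ∈ N i, t j * u j ≤ T}

@[simps]
def blockSumsAndCost : (ι → ℝ) →ₗ[ℝ] (κ → ℝ) × ℝ where
  toFun d := (fun i => ∑ j ∈ N i, d j, ∑ i, ∑ j ∈ N i, t j * d j)
  map_add' d e := by ext <;> simp [sum_add_distrib, mul_add]
  map_smul' c d := by ext <;> simp [mul_sum, mul_left_comm]

variable {N t T}

theorem add_mem_mckpFeasibleSet {u d : ι → ℝ} (hu : u ∈ mckpFeasibleSet N t T)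
    (hd : blockSumsAndCost N t d = 0) (hud : 0 ≤ u + d) : u + d ∈ mckpFeasibleSet N t T := by
  simp only [blockSumsAndCost_apply, Prod.mk_eq_zero, funext_iff, Pi.zero_apply] at hd
  refine ⟨hud, fun i => ?_, ?_⟩
  · simp [sum_add_distrib, hu.2.1 i, hd.1 i]
  · simpa [mul_add, sum_add_distrib, hd.2] using hu.2.2

theorem one_le_card_filter_ne_zero_of_mem_mckpFeasibleSet {u : ι → ℝ}
    (hu : u ∈ mckpFeasibleSet N t T) (i : κ) :
    1 ≤ #{j ∈ N i | u j ≠ 0} := by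
  refine card_pos.2 (nonempty_of_sum_ne_zero (f := u) ?_)
  rw [sum_filter_ne_zero, hu.2.1 i]
  exact one_ne_zero

theorem sum_card_filter_ne_zero_le_of_mem_extremePoints [Fintype ι] (hN : Pairwise (Disjoint on N))
    {u : ι → ℝ} (hu : u ∈ (mckpFeasibleSet N t T).extremePoints ℝ) :
    ∑ i, #{j ∈ N i | u j ≠ 0} ≤ Fintype.card κ + 1 := by
  classical
  calc ∑ i, #{j ∈ N i | u j ≠ 0} ≤ #{j | u j ≠ 0} := sum_card_filter_le_card_filter hN _
    _ = Fintype.card {j // u j ≠ 0} := (Fintype.card_subtype _).symm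
    _ ≤ Module.finrank ℝ ((κ → ℝ) × ℝ) := card_support_le_finrank_of_mem_extremePoints hu hu.1.1
          (blockSumsAndCost N t) fun _ => add_mem_mckpFeasibleSet hu.1
    _ = Fintype.card κ + 1 := by simp

end MCKP

theorem mckp_extreme_point_one_hot_except_one_block_two_nonzeros_general
    (k n : ℕ) (hk : 1 ≤ k)
    (N : Fin k → Finset (Fin n))
    (hNdisj : ∀ i i' : Fin k, i ≠ i' → Disjoint (N i) (N i'))
    (t : Fin n → ℝ) (T : ℝ)
    (F : Set (Fin n → ℝ))
    (hF : F = {u : Fin n → ℝ |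
      (∀ j, 0 ≤ u j) ∧ (∀ i, ∑ j ∈ N i, u j = 1) ∧
      ∑ i : Fin k, ∑ j ∈ N i, t j * u j ≤ T})
    (u : Fin n → ℝ) (hu : u ∈ Set.extremePoints ℝ F) :
    ∃ i₀ : Fin k,
      (∀ i : Fin k, i ≠ i₀ → {j : Fin n | j ∈ N i ∧ u j ≠ 0}.ncard = 1) ∧
      {j : Fin n | j ∈ N i₀ ∧ u j ≠ 0}.ncard ≤ 2 := by
  subst hF
  have : Nonempty (Fin k) := ⟨⟨0, hk⟩⟩
  simp only [← coe_filter, Set.ncard_coe_finset]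
  exact exists_forall_ne_eq_one_and_le_two (one_le_card_filter_ne_zero_of_mem_mckpFeasibleSet hu.1)
    (sum_card_filter_ne_zero_le_of_mem_extremePoints hNdisj hu)

theorem mckp_extreme_point_one_hot_except_one_block_two_nonzeros
    (k n : ℕ) (hk : 1 ≤ k) (hn : 1 ≤ n)
    (N : Fin k → Finset (Fin n))
    (hNne : ∀ i, (N i).Nonempty)
    (hNdisj : ∀ i i' : Fin k, i ≠ i' → Disjoint (N i) (N i'))
    (hNcover : ∀ j : Fin n, ∃ i : Fin k, j ∈ N i)
    (t : Fin n → ℝ) (T : ℝ)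
    (F : Set (Fin n → ℝ))
    (hF : F = {u : Fin n → ℝ |
      (∀ j, 0 ≤ u j) ∧ (∀ i, ∑ j ∈ N i, u j = 1) ∧
      ∑ i : Fin k, ∑ j ∈ N i, t j * u j ≤ T})
    (u : Fin n → ℝ) (hu : u ∈ Set.extremePoints ℝ F) :
    ∃ i₀ : Fin k,
      (∀ i : Fin k, i ≠ i₀ → {j : Fin n | j ∈ N i ∧ u j ≠ 0}.ncard = 1) ∧
      {j : Fin n | j ∈ N i₀ ∧ u j ≠ 0}.ncard ≤ 2 :=
  mckp_extreme_point_one_hot_except_one_block_two_nonzeros_general k n hk N hNdisj t T F hF u hu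
end

section
/- Let α* ∈ A and β* ∈ B with LAT(α*, β*) ≤ T. Then there exist α maximizing the linear objective α ↦ Σ_{s=1}^S Σ_{b=1}^d Σ_{c∈C} α^s_{b,c} · α*^s_{b,c} over S^{α*} = {α ∈ A : LAT(α, β*) ≤ T}, and β maximizing β ↦ Σ_{s=1}^S Σ_{b=1}^d β^s_b · β*^s_b over S^{β*} = {β ∈ B : LAT(α*, β) ≤ T}, such that: (i) for every pair (s,b) ∈ {1,…,S} × {1,…,d} except at most one pair (s_α, b_α), the vector α^s_b has exactly one nonzero entry, and α^{s_α}_{b_α} has at most two nonzero entries; and (ii) for every s ∈ {1,…,S} except at most one stage s_β, the vector β^s has exactly one nonzero entry, and β^{s_β} has at most two nonzero entries. -/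
/-- Membership in the product of simplices `A`: each block's configuration
distribution has nonnegative entries summing to one. -/
def InA {S d : ℕ} {C : Type} [Fintype C] (α : Fin S → Fin d → C → ℝ) : Prop :=
  ∀ s b, (∀ c, 0 ≤ α s b c) ∧ ∑ c, α s b c = 1

/-- Membership in the product of simplices `B`: each stage's depth
distribution has nonnegative entries summing to one. -/
def InB {S d : ℕ} (β : Fin S → Fin d → ℝ) : Prop :=
  ∀ s, (∀ b, 0 ≤ β s b) ∧ ∑ b, β s b = 1

/-- The expected latency formula
`LAT(α, β) = Σ_s Σ_{b'} Σ_{b ≤ b'} Σ_c α^s_{b,c} · t^s_{b,c} · β^s_{b'}`. -/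
noncomputable def LAT {S d : ℕ} {C : Type} [Fintype C]
    (t : Fin S → Fin d → C → ℝ)
    (α : Fin S → Fin d → C → ℝ) (β : Fin S → Fin d → ℝ) : ℝ :=
  ∑ s, ∑ b' : Fin d, ∑ b ∈ Finset.Iic b', ∑ c, α s b c * t s b c * β s b'


section Knap
variable {ι K : Type} [Fintype ι] [Fintype K]


/-- simplex membership in every block -/
def KSimp (x : ι → K → ℝ) : Prop := ∀ i, (∀ k, 0 ≤ x i k) ∧ ∑ k, x i k = 1

/-- Move along a null direction to shrink support. -/
lemma knap_move (w u : ι → K → ℝ) (T : ℝ) (x v : ι → K → ℝ)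
    (hx : KSimp x) (hxc : ∑ i, ∑ k, x i k * w i k ≤ T)
    (hv0 : v ≠ 0) (hvsum : ∀ i, ∑ k, v i k = 0)
    (hvsupp : ∀ i k, x i k = 0 → v i k = 0)
    (hvcost : ∑ i, ∑ k, v i k * w i k = 0)
    (hvobj : 0 ≤ ∑ i, ∑ k, v i k * u i k) :
    ∃ y : ι → K → ℝ, KSimp y ∧ (∑ i, ∑ k, y i k * w i k ≤ T) ∧
      (∑ i, ∑ k, x i k * u i k ≤ ∑ i, ∑ k, y i k * u i k) ∧
      (∀ i k, x i k = 0 → y i k = 0) ∧ (∃ i k, x i k ≠ 0 ∧ y i k = 0) := by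
  -- some entry of v is negative
  have hneg : ∃ p : ι × K, v p.1 p.2 < 0 := by
    by_contra h
    push_neg at h
    apply hv0
    funext i k
    have hz : ∀ k', v i k' = 0 := by
      intro k'
      by_contra hk'
      have hpos : 0 < v i k' := lt_of_le_of_ne (h (i, k')) (Ne.symm hk')
      have : (0:ℝ) < ∑ k, v i k := by
        refine Finset.sum_pos' (fun k _ => h (i, k)) ⟨k', Finset.mem_univ _, hpos⟩
      rw [hvsum i] at this; exact lt_irrefl _ this
    exact hz k
  classical
  set F : Finset (ι × K) := Finset.univ.filter (fun p : ι × K => v p.1 p.2 < 0) with hF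
  have hFne : F.Nonempty := by
    obtain ⟨p, hp⟩ := hneg
    exact ⟨p, by simp [hF, hp]⟩
  obtain ⟨p0, hp0F, hp0min⟩ := Finset.exists_min_image F
    (fun p => x p.1 p.2 / (-v p.1 p.2)) hFne
  have hp0neg : v p0.1 p0.2 < 0 := by simpa [hF] using hp0F
  set δ : ℝ := x p0.1 p0.2 / (-v p0.1 p0.2) with hδ
  have hp0x : 0 < x p0.1 p0.2 := by
    have h0 : x p0.1 p0.2 ≠ 0 := fun h => (by simpa [hvsupp _ _ h] using hp0neg)
    exact lt_of_le_of_ne ((hx p0.1).1 p0.2) (Ne.symm h0)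
  have hδpos : 0 < δ := div_pos hp0x (by linarith)
  refine ⟨fun i k => x i k + δ * v i k, ?_, ?_, ?_, ?_, ?_⟩
  · intro i
    constructor
    · intro k
      show 0 ≤ x i k + δ * v i k
      rcases le_or_gt 0 (v i k) with hv | hv
      · have : 0 ≤ δ * v i k := mul_nonneg hδpos.le hv
        linarith [(hx i).1 k]
      · have hmem : (i, k) ∈ F := by simp [hF, hv]
        have := hp0min (i, k) hmem
        have hle : δ ≤ x i k / (-v i k) := this
        have : δ * (-v i k) ≤ x i k := by
          rw [← le_div_iff₀ (by linarith)]
          exact hle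
        nlinarith
    · show ∑ k, (x i k + δ * v i k) = 1
      have : ∑ k, (x i k + δ * v i k) = ∑ k, x i k + δ * ∑ k, v i k := by
        rw [Finset.sum_add_distrib, Finset.mul_sum]
      rw [this, (hx i).2, hvsum i]; ring
  · have : ∑ i, ∑ k, (x i k + δ * v i k) * w i k
        = (∑ i, ∑ k, x i k * w i k) + δ * ∑ i, ∑ k, v i k * w i k := by
      rw [Finset.mul_sum, ← Finset.sum_add_distrib]
      refine Finset.sum_congr rfl fun i _ => ?_
      rw [Finset.mul_sum, ← Finset.sum_add_distrib]
      exact Finset.sum_congr rfl fun k _ => by ring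
    rw [this, hvcost]; linarith
  · have : ∑ i, ∑ k, (x i k + δ * v i k) * u i k
        = (∑ i, ∑ k, x i k * u i k) + δ * ∑ i, ∑ k, v i k * u i k := by
      rw [Finset.mul_sum, ← Finset.sum_add_distrib]
      refine Finset.sum_congr rfl fun i _ => ?_
      rw [Finset.mul_sum, ← Finset.sum_add_distrib]
      exact Finset.sum_congr rfl fun k _ => by ring
    rw [this]
    nlinarith [mul_nonneg hδpos.le hvobj]
  · intro i k h
    show x i k + δ * v i k = 0
    rw [h, hvsupp i k h]; ring
  · refine ⟨p0.1, p0.2, hp0x.ne', ?_⟩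
    show x p0.1 p0.2 + δ * v p0.1 p0.2 = 0
    rw [hδ, div_mul_eq_mul_div, mul_div_assoc, div_neg, div_self hp0neg.ne]
    ring





open Classical in
noncomputable def kind (i : ι) (a : K) : ι → K → ℝ :=
  fun i' k => if i' = i ∧ k = a then 1 else 0

lemma kind_pair (i : ι) (a : K) (g : ι → K → ℝ) :
    ∑ i', ∑ k, kind i a i' k * g i' k = g i a := by
  classical
  simp [kind, ite_and, ite_mul, Finset.sum_ite_eq']

/-- A nonzero direction in the kernel of the sum and cost functionals,
    supported in the support of `x`. -/
lemma knap_exchange (w : ι → K → ℝ) (x : ι → K → ℝ)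
    (i j : ι) (a b a' b' : K) (hab : a ≠ b) (hab' : a' ≠ b')
    (hxa : x i a ≠ 0) (hxb : x i b ≠ 0) (hxa' : x j a' ≠ 0) (hxb' : x j b' ≠ 0)
    (h1 : (j, b') ≠ (i, a)) (h2 : (j, b') ≠ (i, b)) :
    ∃ v : ι → K → ℝ, v ≠ 0 ∧ (∀ i', ∑ k, v i' k = 0) ∧
      (∀ i' k, x i' k = 0 → v i' k = 0) ∧
      (∑ i', ∑ k, v i' k * w i' k = 0) := by
  classical
  set p : ℝ := w i a - w i b with hp
  set p' : ℝ := w j a' - w j b' with hp'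
  set δ1 : ℝ := if p = 0 then 1 else p' with hδ1
  set δ2 : ℝ := if p = 0 then 0 else -p with hδ2
  set v : ι → K → ℝ := fun i' k =>
    δ1 * (kind i a i' k - kind i b i' k) + δ2 * (kind j a' i' k - kind j b' i' k) with hv
  have expand : ∀ g : ι → K → ℝ, ∑ i', ∑ k, v i' k * g i' k
      = δ1 * (g i a - g i b) + δ2 * (g j a' - g j b') := by
    intro g
    have h : ∀ i' k, v i' k * g i' k
        = δ1 * (kind i a i' k * g i' k) - δ1 * (kind i b i' k * g i' k)
          + (δ2 * (kind j a' i' k * g i' k) - δ2 * (kind j b' i' k * g i' k)) := by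
      intro i' k; simp only [hv]; ring
    simp only [h, Finset.sum_add_distrib, Finset.sum_sub_distrib, ← Finset.mul_sum,
      kind_pair]
    ring
  refine ⟨v, ?_, ?_, ?_, ?_⟩
  · -- nonzero
    intro h0
    by_cases hpz : p = 0
    · have := congrFun (congrFun h0 i) a
      simp only [hv, hδ1, hδ2, hpz, if_pos, kind] at this
      simp [hab] at this
    · have := congrFun (congrFun h0 j) b'
      have e1 : ¬ (j = i ∧ b' = a) := by
        intro h; exact h1 (by rw [h.1, h.2])
      have e2 : ¬ (j = i ∧ b' = b) := by
        intro h; exact h2 (by rw [h.1, h.2])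
      simp only [hv, hδ1, hδ2, if_neg hpz, kind] at this
      simp [e1, e2, Ne.symm hab'] at this
      exact hpz this
  · intro i'
    have h : ∀ k, v i' k
        = δ1 * kind i a i' k - δ1 * kind i b i' k
          + (δ2 * kind j a' i' k - δ2 * kind j b' i' k) := by
      intro k; simp only [hv]; ring
    simp only [h, Finset.sum_add_distrib, Finset.sum_sub_distrib, ← Finset.mul_sum]
    have s1 : ∀ (i₀ : ι) (a₀ : K), ∑ k, kind i₀ a₀ i' k = if i' = i₀ then 1 else 0 := by
      intro i₀ a₀; simp [kind, ite_and]
    rw [s1, s1, s1, s1]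
    by_cases h1' : i' = i <;> by_cases h2' : i' = j <;> simp [h1', h2']
  · intro i' k hxz
    have e1 : ¬ (i' = i ∧ k = a) := fun h => hxa (by rw [← h.1, ← h.2]; exact hxz)
    have e2 : ¬ (i' = i ∧ k = b) := fun h => hxb (by rw [← h.1, ← h.2]; exact hxz)
    have e3 : ¬ (i' = j ∧ k = a') := fun h => hxa' (by rw [← h.1, ← h.2]; exact hxz)
    have e4 : ¬ (i' = j ∧ k = b') := fun h => hxb' (by rw [← h.1, ← h.2]; exact hxz)
    simp [hv, kind, e1, e2, e3, e4]
  · rw [expand]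
    by_cases hpz : p = 0
    · rw [← hp, ← hp', hδ1, hδ2, if_pos hpz, if_pos hpz, hpz]; ring
    · rw [← hp, ← hp', hδ1, hδ2, if_neg hpz, if_neg hpz]; ring





set_option maxHeartbeats 1000000 in
lemma knap_sparse [Nonempty ι]
    (w u : ι → K → ℝ) (T : ℝ) (x0 : ι → K → ℝ) (hx0 : KSimp x0)
    (hc0 : ∑ i, ∑ k, x0 i k * w i k ≤ T) :
    ∃ x : ι → K → ℝ, KSimp x ∧ (∑ i, ∑ k, x i k * w i k ≤ T) ∧
      (∀ y, KSimp y → (∑ i, ∑ k, y i k * w i k ≤ T) →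
        ∑ i, ∑ k, y i k * u i k ≤ ∑ i, ∑ k, x i k * u i k) ∧
      ∃ i0 : ι, (∀ i, i ≠ i0 → {k | x i k ≠ 0}.ncard = 1) ∧
        {k | x i0 k ≠ 0}.ncard ≤ 2 := by
  classical
  set Feas : Set (ι → K → ℝ) := {x | KSimp x ∧ ∑ i, ∑ k, x i k * w i k ≤ T} with hFeas
  set obj : (ι → K → ℝ) → ℝ := fun x => ∑ i, ∑ k, x i k * u i k with hobj
  have contSum : ∀ g : ι → K → ℝ,
      Continuous fun x : ι → K → ℝ => ∑ i, ∑ k, x i k * g i k := by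
    intro g
    refine continuous_finset_sum _ fun i _ => continuous_finset_sum _ fun k _ => ?_
    exact ((continuous_apply k).comp (continuous_apply i : Continuous fun p : ι → K → ℝ => p i)).mul continuous_const
  have hclosed : IsClosed Feas := by
    have h1 : Feas = (⋂ i, ⋂ k, {x : ι → K → ℝ | 0 ≤ x i k}) ∩
        ((⋂ i, {x : ι → K → ℝ | ∑ k, x i k = 1}) ∩
          {x : ι → K → ℝ | ∑ i, ∑ k, x i k * w i k ≤ T}) := by
      ext x
      simp only [hFeas, Set.mem_setOf_eq, Set.mem_inter_iff, Set.mem_iInter, KSimp]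
      constructor
      · rintro ⟨h, hT⟩; exact ⟨fun i k => (h i).1 k, fun i => (h i).2, hT⟩
      · rintro ⟨h1, h2, hT⟩; exact ⟨fun i => ⟨h1 i, h2 i⟩, hT⟩
    rw [h1]
    refine ((isClosed_iInter fun i => isClosed_iInter fun k =>
        isClosed_le continuous_const ((continuous_apply k).comp (continuous_apply i))).inter
      ((isClosed_iInter fun i => isClosed_eq
          (continuous_finset_sum _ fun k _ => (continuous_apply k).comp (continuous_apply i))
          continuous_const).inter
        (isClosed_le (contSum w) continuous_const)))
  have hbdd : Bornology.IsBounded Feas := by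
    rw [isBounded_iff_forall_norm_le]
    refine ⟨1, fun x hx => ?_⟩
    rw [pi_norm_le_iff_of_nonneg zero_le_one]
    intro i
    rw [pi_norm_le_iff_of_nonneg zero_le_one]
    intro k
    rw [Real.norm_eq_abs, abs_le]
    have h1 := (hx.1 i).1 k
    have h2 : x i k ≤ 1 := by
      have := Finset.single_le_sum (f := x i) (fun k _ => (hx.1 i).1 k) (Finset.mem_univ k)
      rw [(hx.1 i).2] at this
      exact this
    constructor <;> linarith
  have hcompact : IsCompact Feas :=
    Metric.isCompact_of_isClosed_isBounded hclosed hbdd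
  have hne : Feas.Nonempty := ⟨x0, hx0, hc0⟩
  obtain ⟨z, hzF, hzmax⟩ := hcompact.exists_isMaxOn hne (contSum u).continuousOn
  set tot : (ι → K → ℝ) → ℕ :=
    fun x => ∑ i, (Finset.univ.filter (fun k => x i k ≠ 0)).card with htot
  have hP : ∃ n, ∃ x, x ∈ Feas ∧ (∀ y ∈ Feas, obj y ≤ obj x) ∧ tot x = n :=
    ⟨tot z, z, hzF, fun y hy => hzmax hy, rfl⟩
  obtain ⟨x, hxF, hxmax, hxtot⟩ := Nat.find_spec hP
  have hmin : ∀ m, m < Nat.find hP → ¬ ∃ x, x ∈ Feas ∧ (∀ y ∈ Feas, obj y ≤ obj x) ∧ tot x = m :=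
    fun m hm => Nat.find_min hP hm
  -- key exchange impossibility
  have key : ∀ (i j : ι) (a b a' b' : K), a ≠ b → a' ≠ b' →
      x i a ≠ 0 → x i b ≠ 0 → x j a' ≠ 0 → x j b' ≠ 0 →
      (j, b') ≠ (i, a) → (j, b') ≠ (i, b) → False := by
    intro i j a b a' b' hab hab' hxa hxb hxa' hxb' h1 h2
    obtain ⟨v, hv0, hvsum, hvsupp, hvcost⟩ :=
      knap_exchange w x i j a b a' b' hab hab' hxa hxb hxa' hxb' h1 h2
    have main : ∀ v' : ι → K → ℝ, v' ≠ 0 → (∀ i', ∑ k, v' i' k = 0) →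
        (∀ i' k, x i' k = 0 → v' i' k = 0) → (∑ i', ∑ k, v' i' k * w i' k = 0) →
        0 ≤ (∑ i', ∑ k, v' i' k * u i' k) → False := by
      intro v' h0 hs1 hs2 hs3 hs4
      obtain ⟨y, hyS, hyc, hyobj, hsupp, i1, k1, hk1, hk1'⟩ :=
        knap_move w u T x v' hxF.1 hxF.2 h0 hs1 hs2 hs3 hs4
      have hyF : y ∈ Feas := ⟨hyS, hyc⟩
      have hymax : ∀ z' ∈ Feas, obj z' ≤ obj y :=
        fun z' hz' => le_trans (hxmax z' hz') hyobj
      have hsub : ∀ i, (Finset.univ.filter (fun k => y i k ≠ 0))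
          ⊆ (Finset.univ.filter (fun k => x i k ≠ 0)) := by
        intro i k hk
        simp only [Finset.mem_filter, Finset.mem_univ, true_and] at hk ⊢
        intro h
        exact hk (hsupp i k h)
      have hlt : tot y < tot x := by
        refine Finset.sum_lt_sum (fun i _ => Finset.card_le_card (hsub i))
          ⟨i1, Finset.mem_univ _, Finset.card_lt_card ?_⟩
        rw [Finset.ssubset_iff_of_subset (hsub i1)]
        exact ⟨k1, by simp [hk1], by simp [hk1']⟩
      rw [hxtot] at hlt
      exact hmin (tot y) hlt ⟨y, hyF, hymax, rfl⟩
    rcases le_or_gt 0 (∑ i', ∑ k, v i' k * u i' k) with h | h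
    · exact main v hv0 hvsum hvsupp hvcost h
    · refine main (fun i' k => -v i' k) ?_ ?_ ?_ ?_ ?_
      · intro h0
        apply hv0
        funext i' k
        have := congrFun (congrFun h0 i') k
        simpa using this
      · intro i'; simp [hvsum i']
      · intro i' k h'; simp [hvsupp i' k h']
      · simp only [neg_mul, Finset.sum_neg_distrib, hvcost, neg_zero]
      · simp only [neg_mul, Finset.sum_neg_distrib]
        linarith
  -- support facts
  set cardS : ι → ℕ := fun i => (Finset.univ.filter (fun k => x i k ≠ 0)).card with hcardS
  have hge1 : ∀ i, 1 ≤ cardS i := by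
    intro i
    rw [Nat.one_le_iff_ne_zero, Ne, Finset.card_eq_zero, ← Ne, ← Finset.nonempty_iff_ne_empty]
    by_contra h
    rw [Finset.not_nonempty_iff_eq_empty, Finset.filter_eq_empty_iff] at h
    have : ∑ k, x i k = 0 := Finset.sum_eq_zero fun k _ => not_not.mp (h (Finset.mem_univ k))
    rw [(hxF.1 i).2] at this
    exact one_ne_zero this
  have hle2 : ∀ i, cardS i ≤ 2 := by
    intro i
    by_contra h
    push_neg at h
    obtain ⟨a, b, c, ha, hb, hc, hab, hac, hbc⟩ := Finset.two_lt_card_iff.mp h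
    simp only [Finset.mem_filter, Finset.mem_univ, true_and] at ha hb hc
    exact key i i a b b c hab hbc ha hb hb hc
      (by simp only [Ne, Prod.mk.injEq, not_and]; intro _ h'; exact hac h'.symm)
      (by simp only [Ne, Prod.mk.injEq, not_and]; intro _ h'; exact hbc h'.symm)
  have hone : ∀ i j, i ≠ j → 2 ≤ cardS i → 2 ≤ cardS j → False := by
    intro i j hij h2i h2j
    obtain ⟨a, ha, b, hb, hab⟩ := Finset.one_lt_card.mp (by omega : 1 < cardS i)
    obtain ⟨a', ha', b', hb', hab'⟩ := Finset.one_lt_card.mp (by omega : 1 < cardS j)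
    simp only [Finset.mem_filter, Finset.mem_univ, true_and] at ha hb ha' hb'
    exact key i j a b a' b' hab hab' ha hb ha' hb'
      (by simp only [Ne, Prod.mk.injEq, not_and]; intro h' _; exact hij h'.symm)
      (by simp only [Ne, Prod.mk.injEq, not_and]; intro h' _; exact hij h'.symm)
  have hncard : ∀ i, {k | x i k ≠ 0}.ncard = cardS i := by
    intro i
    rw [Set.ncard_eq_toFinset_card']
    congr 1
    ext k
    simp
  -- choose the exceptional index
  have hfinal : ∃ i0 : ι, (∀ i, i ≠ i0 → cardS i = 1) ∧ cardS i0 ≤ 2 := by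
    by_cases h : ∃ i, 2 ≤ cardS i
    · obtain ⟨i0, hi0⟩ := h
      refine ⟨i0, fun i hi => ?_, hle2 i0⟩
      have := hge1 i
      by_contra hne1
      have h2 : 2 ≤ cardS i := by omega
      exact hone i i0 hi h2 hi0
    · push_neg at h
      refine ⟨Classical.arbitrary ι, fun i _ => ?_, ?_⟩
      · have := h i; have := hge1 i; omega
      · have := h (Classical.arbitrary ι); omega
  obtain ⟨i0, hi1, hi2⟩ := hfinal
  exact ⟨x, hxF.1, hxF.2, fun y hy hyc => hxmax y ⟨hy, hyc⟩,
    i0, fun i hi => by rw [hncard]; exact hi1 i hi, by rw [hncard]; exact hi2⟩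


end Knap

lemma sum_Iic_swap {d : ℕ} (f : Fin d → Fin d → ℝ) :
    ∑ b' : Fin d, ∑ b ∈ Finset.Iic b', f b b'
      = ∑ b : Fin d, ∑ b' ∈ Finset.Ici b, f b b' := by
  have h1 : ∀ b' : Fin d, Finset.Iic b' = Finset.univ.filter (· ≤ b') :=
    fun b' => by ext; simp
  have h2 : ∀ b : Fin d, Finset.Ici b = Finset.univ.filter (b ≤ ·) :=
    fun b => by ext; simp
  simp_rw [h1, h2, Finset.sum_filter]
  exact Finset.sum_comm

lemma LAT_alpha {S d : ℕ} {C : Type} [Fintype C]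
    (t : Fin S → Fin d → C → ℝ) (α : Fin S → Fin d → C → ℝ) (β : Fin S → Fin d → ℝ) :
    LAT t α β = ∑ p : Fin S × Fin d, ∑ c,
      α p.1 p.2 c * (t p.1 p.2 c * ∑ b' ∈ Finset.Ici p.2, β p.1 b') := by
  rw [LAT, Fintype.sum_prod_type]
  refine Finset.sum_congr rfl fun s _ => ?_
  rw [sum_Iic_swap (fun b b' => ∑ c, α s b c * t s b c * β s b')]
  refine Finset.sum_congr rfl fun b _ => ?_
  rw [Finset.sum_comm]
  refine Finset.sum_congr rfl fun c _ => ?_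
  rw [Finset.mul_sum, Finset.mul_sum]
  exact Finset.sum_congr rfl fun b' _ => by ring

lemma LAT_beta {S d : ℕ} {C : Type} [Fintype C]
    (t : Fin S → Fin d → C → ℝ) (α : Fin S → Fin d → C → ℝ) (β : Fin S → Fin d → ℝ) :
    LAT t α β = ∑ s, ∑ b' : Fin d,
      β s b' * ∑ b ∈ Finset.Iic b', ∑ c, α s b c * t s b c := by
  rw [LAT]
  refine Finset.sum_congr rfl fun s _ => ?_
  refine Finset.sum_congr rfl fun b' _ => ?_
  rw [Finset.mul_sum]
  refine Finset.sum_congr rfl fun b _ => ?_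
  rw [Finset.mul_sum]
  refine Finset.sum_congr rfl fun c _ => ?_
  ring

/-- There exist maximizers of the two linear "credit" objectives over the
latency-constrained simplices which are sparse: all blocks (resp. stages)
are one-hot except at most one, which has at most two nonzero entries. -/
theorem projection_step_sparse_maximizers
    (S d : ℕ) (hS : 1 ≤ S) (hd : 1 ≤ d)
    (C : Type) [Fintype C] [Nonempty C]
    (t : Fin S → Fin d → C → ℝ) (ht : ∀ s b c, 0 ≤ t s b c) (T : ℝ)
    (αstar : Fin S → Fin d → C → ℝ) (βstar : Fin S → Fin d → ℝ)
    (hα : InA αstar) (hβ : InB βstar) (hlat : LAT t αstar βstar ≤ T) :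
    ∃ α : Fin S → Fin d → C → ℝ, ∃ β : Fin S → Fin d → ℝ,
      (InA α ∧ LAT t α βstar ≤ T) ∧
      (∀ α' : Fin S → Fin d → C → ℝ, InA α' → LAT t α' βstar ≤ T →
        ∑ s, ∑ b, ∑ c, α' s b c * αstar s b c ≤
          ∑ s, ∑ b, ∑ c, α s b c * αstar s b c) ∧
      (InB β ∧ LAT t αstar β ≤ T) ∧
      (∀ β' : Fin S → Fin d → ℝ, InB β' → LAT t αstar β' ≤ T →
        ∑ s, ∑ b, β' s b * βstar s b ≤ ∑ s, ∑ b, β s b * βstar s b) ∧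
      (∃ sα : Fin S, ∃ bα : Fin d,
        (∀ s b, (s, b) ≠ (sα, bα) → {c : C | α s b c ≠ 0}.ncard = 1) ∧
        {c : C | α sα bα c ≠ 0}.ncard ≤ 2) ∧
      (∃ sβ : Fin S,
        (∀ s, s ≠ sβ → {b : Fin d | β s b ≠ 0}.ncard = 1) ∧
        {b : Fin d | β sβ b ≠ 0}.ncard ≤ 2) := by
  classical
  haveI : Nonempty (Fin S) := ⟨⟨0, hS⟩⟩
  haveI : Nonempty (Fin d) := ⟨⟨0, hd⟩⟩
  haveI : Nonempty (Fin S × Fin d) := ⟨(⟨0, hS⟩, ⟨0, hd⟩)⟩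
  -- α-side
  set wA : (Fin S × Fin d) → C → ℝ :=
    fun p c => t p.1 p.2 c * ∑ b' ∈ Finset.Ici p.2, βstar p.1 b' with hwA
  set uA : (Fin S × Fin d) → C → ℝ := fun p c => αstar p.1 p.2 c with huA
  have hx0A : KSimp (fun p : Fin S × Fin d => fun c => αstar p.1 p.2 c) :=
    fun p => hα p.1 p.2
  have hcostA : ∀ γ : Fin S → Fin d → C → ℝ,
      (∑ p : Fin S × Fin d, ∑ c, γ p.1 p.2 c * wA p c) = LAT t γ βstar :=
    fun γ => (LAT_alpha t γ βstar).symm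
  obtain ⟨xA, hxAS, hxAc, hxAmax, iA, hA1, hA2⟩ :=
    knap_sparse wA uA T (fun p c => αstar p.1 p.2 c) hx0A
      (by rw [hcostA αstar]; exact hlat)
  -- β-side
  set wB : Fin S → Fin d → ℝ :=
    fun s b' => ∑ b ∈ Finset.Iic b', ∑ c, αstar s b c * t s b c with hwB
  have hcostB : ∀ β : Fin S → Fin d → ℝ,
      (∑ s, ∑ b', β s b' * wB s b') = LAT t αstar β :=
    fun β => (LAT_beta t αstar β).symm
  obtain ⟨xB, hxBS, hxBc, hxBmax, iB, hB1, hB2⟩ :=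
    knap_sparse wB βstar T βstar hβ (by rw [hcostB βstar]; exact hlat)
  refine ⟨fun s b c => xA (s, b) c, xB, ⟨fun s b => hxAS (s, b), ?_⟩, ?_, ⟨hxBS, ?_⟩, ?_,
    ⟨iA.1, iA.2, ?_, ?_⟩, ⟨iB, hB1, hB2⟩⟩
  · rw [← hcostA (fun s b c => xA (s, b) c)]
    calc ∑ p : Fin S × Fin d, ∑ c, xA (p.1, p.2) c * wA p c
        = ∑ p : Fin S × Fin d, ∑ c, xA p c * wA p c := by
          refine Finset.sum_congr rfl fun p _ => ?_; rw [Prod.mk.eta]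
      _ ≤ T := hxAc
  · intro α' hα' hlat'
    have h1 := hxAmax (fun p c => α' p.1 p.2 c) (fun p => hα' p.1 p.2)
      (by rw [hcostA α']; exact hlat')
    calc ∑ s, ∑ b, ∑ c, α' s b c * αstar s b c
        = ∑ p : Fin S × Fin d, ∑ c, α' p.1 p.2 c * αstar p.1 p.2 c :=
          (Fintype.sum_prod_type
            (f := fun p : Fin S × Fin d => ∑ c, α' p.1 p.2 c * αstar p.1 p.2 c)).symm
      _ ≤ ∑ p : Fin S × Fin d, ∑ c, xA p c * uA p c := h1
      _ = ∑ s, ∑ b, ∑ c, xA (s, b) c * αstar s b c :=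
          Fintype.sum_prod_type (f := fun p : Fin S × Fin d => ∑ c, xA p c * uA p c)
  · rw [← hcostB xB]; exact hxBc
  · intro β' hβ' hlat'
    exact hxBmax β' hβ' (by rw [hcostB β']; exact hlat')
  · intro s b hsb
    exact hA1 (s, b) (fun h => hsb (h.trans Prod.mk.eta.symm))
  · show {c | xA (iA.1, iA.2) c ≠ 0}.ncard ≤ 2
    rw [Prod.mk.eta]
    exact hA2
end
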